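/- arXiv:1310.6421 — 8 statements merged into one kernel-verified Lean document; each statement's English description precedes it below -/
import Mathlib

section
/- For all x, z₁, z₂ ∈ ℝ and t, s > 0, writing z̄ = (z₁+z₂)/2 and Δz = z₁−z₂, one has G₁(t, x−z̄)·G₁(s, Δz) ≤ ((4t)∨s)/√(ts) · G₁((4t)∨s, x−z₁) · G₁((4t)∨s, x−z₂), where a∨b = max(a,b). -/
/-
Both sides are Gaussians with the same prefactor `(2π √(ts))⁻¹`: the factor `M = (4t) ∨ s` in front
cancels the normalisation `√(2πM)²` on the right. By the parallelogram identity
`(x - z₁)² + (x - z₂)² = 2 (x - z̄)² + Δz² / 2`, the right exponent is `-(x - z̄)²/M - Δz²/(4M)`,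
which dominates the left one `-(x - z̄)²/(2t) - Δz²/(2s)` because `2t ≤ M` and `2s ≤ 4M`.
-/

open Real

noncomputable def heatKernel (ν t x : ℝ) : ℝ :=
  (1 / Real.sqrt (2 * Real.pi * ν * t)) * Real.exp (-(x ^ 2) / (2 * ν * t))

theorem heatKernel_mul_heatKernel {ν a b : ℝ} (hν : 0 ≤ ν) (ha : 0 ≤ a) (u v : ℝ) :
    heatKernel ν a u * heatKernel ν b v =
      (2 * π * ν * √(a * b))⁻¹ * exp (-(u ^ 2 / (2 * ν * a) + v ^ 2 / (2 * ν * b))) := by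
  have hsqrt : √(2 * π * ν * a) * √(2 * π * ν * b) = 2 * π * ν * √(a * b) := by
    rw [← sqrt_mul (by positivity), show 2 * π * ν * a * (2 * π * ν * b) = (2 * π * ν) ^ 2 * (a * b)
      by ring, sqrt_mul (by positivity), sqrt_sq (by positivity)]
  rw [heatKernel, heatKernel, neg_add, exp_add, ← hsqrt, neg_div, neg_div]
  ring

theorem sq_sub_add_sq_sub (x z₁ z₂ : ℝ) :
    (x - z₁) ^ 2 + (x - z₂) ^ 2 = 2 * (x - (z₁ + z₂) / 2) ^ 2 + (z₁ - z₂) ^ 2 / 2 := by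
  ring

theorem stmt_5 (x z₁ z₂ t s : ℝ) (ht : 0 < t) (hs : 0 < s) :
    heatKernel 1 t (x - (z₁ + z₂) / 2) * heatKernel 1 s (z₁ - z₂) ≤
      (max (4 * t) s / Real.sqrt (t * s)) *
        heatKernel 1 (max (4 * t) s) (x - z₁) *
        heatKernel 1 (max (4 * t) s) (x - z₂) := by
  set M := max (4 * t) s
  have hM : 0 < M := hs.trans_le (le_max_right _ _)
  have h4t : 4 * t ≤ M := le_max_left _ _
  have hsM : s ≤ M := le_max_right _ _
  set A := x - (z₁ + z₂) / 2
  set B := z₁ - z₂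
  have hrhs : (M / √(t * s)) * heatKernel 1 M (x - z₁) * heatKernel 1 M (x - z₂) =
      (2 * π * 1 * √(t * s))⁻¹ * exp (-(A ^ 2 / M + B ^ 2 / (4 * M))) := by
    rw [mul_assoc, heatKernel_mul_heatKernel zero_le_one hM.le, sqrt_mul_self hM.le,
      ← add_div, sq_sub_add_sq_sub]
    have hexp : (2 * A ^ 2 + B ^ 2 / 2) / (2 * 1 * M) = A ^ 2 / M + B ^ 2 / (4 * M) := by
      field_simp
      ring
    rw [hexp]
    field_simp
  rw [hrhs, heatKernel_mul_heatKernel zero_le_one ht.le]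
  gcongr (_ : ℝ)⁻¹ * exp (-?_)
  have hA : A ^ 2 / M ≤ A ^ 2 / (2 * 1 * t) := by gcongr; linarith
  have hB : B ^ 2 / (4 * M) ≤ B ^ 2 / (2 * 1 * s) := by gcongr; linarith
  linarith
end

section
/- For ν, σ > 0, t > 0 and x, y ∈ ℝ, ∫₀ᵗ G_ν(s,x)·G_σ(t−s,y) ds = (1/(2√(νσ))) · Erfc((1/√(2t))·(|x|/√ν + |y|/√σ)), where Erfc(x) = (2/√π)∫ₓ^∞ e^{−u²} du. -/
noncomputable def Erfc (x : ℝ) : ℝ :=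
  (2 / Real.sqrt Real.pi) * ∫ u in Set.Ioi x, Real.exp (-u ^ 2)

open Real MeasureTheory Set

/-!
Substituting `s = t u² / (1 + u²)` turns the convolution into
`(π √(νσ))⁻¹ e^{-(p² + q²)} ∫₀^∞ e^{-(p²/u² + q² u²)} / (1 + u²) du` with `p = |x| / √(2νt)` and
`q = |y| / √(2σt)`. Writing `1 / (1 + u²) = ∫₀^∞ e^{-(1 + u²) w} dw` and exchanging the integrals,
the inner integral is Glasser's `∫₀^∞ e^{-(c²/u² + g² u²)} du = √π / (2g) e^{-2cg}` (the
substitution `v = g u - c / u` reduces it to a Gaussian integral), and the substitution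
`z = p + √(q² + w)` turns the outer one into `∫_{p+q}^∞ e^{-z²} dz`.
-/

/-- The positive root `u` of `g * u ^ 2 - v * u - c = 0`, i.e. the inverse of the bijection
`u ↦ g * u - c / u` from `(0, ∞)` onto `ℝ` (for `c, g > 0`). -/
noncomputable def mulSubDivInv (c g v : ℝ) : ℝ := (v + √(v ^ 2 + 4 * c * g)) / (2 * g)

section MulSubDivInv

variable {c g : ℝ}

lemma mulSubDivInv_pos (hc : 0 < c) (hg : 0 < g) (v : ℝ) : 0 < mulSubDivInv c g v := by
  have : |v| < √(v ^ 2 + 4 * c * g) := by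
    rw [← sqrt_sq_eq_abs]
    exact sqrt_lt_sqrt (sq_nonneg v) (by linarith [mul_pos hc hg])
  unfold mulSubDivInv
  exact div_pos (by linarith [neg_abs_le v]) (by positivity)

lemma mul_mulSubDivInv_sub_div (hc : 0 < c) (hg : 0 < g) (v : ℝ) :
    g * mulSubDivInv c g v - c / mulSubDivInv c g v = v := by
  have hpos := mulSubDivInv_pos hc hg v
  have hw : √(v ^ 2 + 4 * c * g) ^ 2 = v ^ 2 + 4 * c * g := sq_sqrt (by nlinarith [mul_pos hc hg])
  have hroot : g * mulSubDivInv c g v ^ 2 - v * mulSubDivInv c g v - c = 0 := by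
    unfold mulSubDivInv
    set w := √(v ^ 2 + 4 * c * g)
    field_simp
    linear_combination hw
  field_simp
  linear_combination hroot

lemma mulSubDivInv_mul_sub_div (hc : 0 ≤ c) (hg : 0 < g) {u : ℝ} (hu : 0 < u) :
    mulSubDivInv c g (g * u - c / u) = u := by
  have hsq : (g * u - c / u) ^ 2 + 4 * c * g = (g * u + c / u) ^ 2 := by
    field_simp
    ring
  rw [mulSubDivInv, hsq, sqrt_sq (by positivity)]
  field_simp
  ring

lemma hasDerivAt_mulSubDivInv (hc : 0 < c) (hg : 0 < g) (v : ℝ) :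
    HasDerivAt (mulSubDivInv c g) ((1 + v / √(v ^ 2 + 4 * c * g)) / (2 * g)) v := by
  have hsq : HasDerivAt (fun v => v ^ 2 + 4 * c * g) (2 * v) v := by
    simpa using (hasDerivAt_pow 2 v).add_const (4 * c * g)
  have hroot := hsq.sqrt (by nlinarith [mul_pos hc hg])
  rw [mul_div_mul_left _ _ two_ne_zero] at hroot
  exact ((hasDerivAt_id v).add hroot).div_const (2 * g)

end MulSubDivInv

lemma integral_one_add_div_sqrt_mul_exp_neg_sq {d : ℝ} (hd : 0 ≤ d) :
    ∫ v, (1 + v / √(v ^ 2 + d)) * exp (-v ^ 2) = √π := by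
  set f : ℝ → ℝ := fun v => v / √(v ^ 2 + d) * exp (-v ^ 2)
  have hgauss : Integrable fun v : ℝ => exp (-v ^ 2) := by
    simpa using integrable_exp_neg_mul_sq one_pos
  have hf : Integrable f := by
    refine hgauss.mono' (by fun_prop) (Filter.Eventually.of_forall fun v => ?_)
    rw [norm_mul, norm_of_nonneg (exp_pos _).le, norm_div, norm_eq_abs,
      norm_of_nonneg (sqrt_nonneg _)]
    exact mul_le_of_le_one_left (exp_pos _).le
      (div_le_one_of_le₀ (abs_le_sqrt (by linarith)) (sqrt_nonneg _))
  have hodd : ∫ v, f v = 0 := by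
    have h := integral_neg_eq_self f volume
    simp only [f, neg_sq, neg_div, neg_mul, integral_neg] at h
    linarith
  have hsplit : ∀ v, (1 + v / √(v ^ 2 + d)) * exp (-v ^ 2) = exp (-v ^ 2) + f v := fun v => by
    simp only [f]; ring
  simp only [hsplit]
  rw [integral_add hgauss hf, hodd, add_zero]
  simpa using integral_gaussian 1

lemma integral_Ioi_exp_neg_sq_div_sq_add_sq_mul_sq_of_pos {c g : ℝ} (hc : 0 < c) (hg : 0 < g) :
    ∫ u in Ioi (0:ℝ), exp (-(c ^ 2 / u ^ 2 + g ^ 2 * u ^ 2)) =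
      √π / (2 * g) * exp (-(2 * c * g)) := by
  have himage : mulSubDivInv c g '' univ = Ioi 0 := by
    refine Subset.antisymm ?_ fun u hu =>
      ⟨g * u - c / u, trivial, mulSubDivInv_mul_sub_div hc.le hg hu⟩
    rintro _ ⟨v, -, rfl⟩
    exact mulSubDivInv_pos hc hg v
  have hinj : InjOn (mulSubDivInv c g) univ :=
    (Function.LeftInverse.injective (g := fun u => g * u - c / u)
      (mul_mulSubDivInv_sub_div hc hg)).injOn
  have hintegrand : ∀ v, |(1 + v / √(v ^ 2 + 4 * c * g)) / (2 * g)| •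
        exp (-(c ^ 2 / mulSubDivInv c g v ^ 2 + g ^ 2 * mulSubDivInv c g v ^ 2)) =
      exp (-(2 * c * g)) / (2 * g) * ((1 + v / √(v ^ 2 + 4 * c * g)) * exp (-v ^ 2)) := by
    intro v
    have hinv := mul_mulSubDivInv_sub_div hc hg v
    have hpos := mulSubDivInv_pos hc hg v
    have hratio : -1 ≤ v / √(v ^ 2 + 4 * c * g) := by
      rw [neg_le, ← neg_div]
      exact div_le_one_of_le₀ ((neg_le_abs v).trans (abs_le_sqrt (by nlinarith [mul_pos hc hg])))
        (sqrt_nonneg _)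
    -- with `u = mulSubDivInv c g v`, `c² / u² + g² u² = (g u - c / u) ² + 2 c g = v² + 2 c g`
    have hexp : -(c ^ 2 / mulSubDivInv c g v ^ 2 + g ^ 2 * mulSubDivInv c g v ^ 2) =
        -(2 * c * g) + -v ^ 2 := by
      generalize mulSubDivInv c g v = u at hinv hpos
      subst hinv
      field_simp
      ring
    rw [smul_eq_mul, abs_of_nonneg (div_nonneg (by linarith) (by positivity)), hexp, exp_add]
    ring
  rw [← himage, integral_image_eq_integral_abs_deriv_smul MeasurableSet.univ
    (fun v _ => (hasDerivAt_mulSubDivInv hc hg v).hasDerivWithinAt) hinj, Measure.restrict_univ]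
  simp only [hintegrand]
  rw [integral_const_mul, integral_one_add_div_sqrt_mul_exp_neg_sq (by positivity)]
  ring

lemma integral_Ioi_exp_neg_sq_div_sq_add_sq_mul_sq {c g : ℝ} (hc : 0 ≤ c) (hg : 0 < g) :
    ∫ u in Ioi (0:ℝ), exp (-(c ^ 2 / u ^ 2 + g ^ 2 * u ^ 2)) =
      √π / (2 * g) * exp (-(2 * c * g)) := by
  rcases hc.eq_or_lt with rfl | hc
  · have hgauss : ∀ u : ℝ, exp (-(0 ^ 2 / u ^ 2 + g ^ 2 * u ^ 2)) = exp (-g ^ 2 * u ^ 2) :=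
      fun u => by ring_nf
    simp only [hgauss, mul_zero, zero_mul, neg_zero, exp_zero, mul_one]
    rw [integral_gaussian_Ioi, sqrt_div pi_pos.le, sqrt_sq hg.le]
    ring
  · exact integral_Ioi_exp_neg_sq_div_sq_add_sq_mul_sq_of_pos hc hg

lemma integrable_exp_neg_one_add_sq_mul :
    Integrable (fun z : ℝ × ℝ => exp (-((1 + z.1 ^ 2) * z.2)))
      ((volume.restrict (Ioi 0)).prod (volume.restrict (Ioi 0))) := by
  have hfactor : ∀ u w : ℝ, exp (-((1 + u ^ 2) * w)) = exp (-w) * exp (-w * u ^ 2) :=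
    fun u w => by rw [← exp_add]; ring_nf
  rw [integrable_prod_iff' (by fun_prop)]
  constructor
  · filter_upwards [ae_restrict_mem measurableSet_Ioi] with w hw
    simp only [hfactor]
    exact (integrable_exp_neg_mul_sq hw).integrableOn.const_mul _
  · have hnorm : ∀ w ∈ Ioi (0:ℝ), √π / 2 * (exp (-w) * w ^ ((1 / 2 : ℝ) - 1)) =
        ∫ u in Ioi 0, ‖exp (-((1 + u ^ 2) * w))‖ := by
      intro w hw
      have hw : 0 < w := hw
      simp only [hfactor, norm_mul, norm_eq_abs, abs_exp]
      rw [integral_const_mul, integral_gaussian_Ioi, sqrt_div' _ hw.le, rpow_sub_one hw.ne',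
        ← sqrt_eq_rpow]
      have := sq_sqrt hw.le
      field_simp
      linear_combination this
    have hGamma : IntegrableOn (fun w => √π / 2 * (exp (-w) * w ^ ((1 / 2 : ℝ) - 1))) (Ioi 0) :=
      (GammaIntegral_convergent one_half_pos).const_mul _
    exact hGamma.congr_fun hnorm measurableSet_Ioi

lemma integral_Ioi_exp_neg_mul_exp_neg_sqrt_div_sqrt {p q : ℝ} (hq : 0 ≤ q) :
    ∫ w in Ioi (0:ℝ), exp (-w) * (exp (-(2 * p * √(q ^ 2 + w))) / √(q ^ 2 + w)) =
      2 * exp (p ^ 2 + q ^ 2) * ∫ z in Ioi (p + q), exp (-z ^ 2) := by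
  have himage : (fun z => (z - p) ^ 2 - q ^ 2) '' Ioi (p + q) = Ioi 0 := by
    refine Subset.antisymm ?_ fun w hw => ⟨p + √(q ^ 2 + w), ?_, ?_⟩
    · rintro _ ⟨z, hz, rfl⟩
      have : q < z - p := by linarith [mem_Ioi.1 hz]
      simp only [mem_Ioi, sub_pos]
      nlinarith
    · have hw : 0 < w := hw
      exact add_lt_add_right ((lt_sqrt hq).2 (by linarith)) p
    · have hw : 0 < w := hw
      simp only [add_sub_cancel_left]
      rw [sq_sqrt (by positivity)]
      ring
  have hderiv : ∀ z ∈ Ioi (p + q),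
      HasDerivWithinAt (fun z => (z - p) ^ 2 - q ^ 2) (2 * (z - p)) (Ioi (p + q)) z := by
    intro z _
    simpa using (((hasDerivAt_id z).sub_const p).pow 2).sub_const (q ^ 2) |>.hasDerivWithinAt
  have hinj : InjOn (fun z => (z - p) ^ 2 - q ^ 2) (Ioi (p + q)) := by
    intro a ha b hb hab
    have ha : 0 ≤ a - p := by linarith [mem_Ioi.1 ha]
    have hb : 0 ≤ b - p := by linarith [mem_Ioi.1 hb]
    have := (pow_left_inj₀ ha hb two_ne_zero).1 (by simpa using hab)
    linarith
  rw [← himage, integral_image_eq_integral_abs_deriv_smul measurableSet_Ioi hderiv hinj,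
    ← integral_const_mul]
  refine setIntegral_congr_fun measurableSet_Ioi fun z hz => ?_
  have hzp : 0 < z - p := by linarith [mem_Ioi.1 hz]
  rw [show q ^ 2 + ((z - p) ^ 2 - q ^ 2) = (z - p) ^ 2 by ring, sqrt_sq hzp.le, smul_eq_mul,
    abs_of_pos (by positivity)]
  calc 2 * (z - p) * (exp (-((z - p) ^ 2 - q ^ 2)) * (exp (-(2 * p * (z - p))) / (z - p)))
      = 2 * exp (-((z - p) ^ 2 - q ^ 2) + -(2 * p * (z - p))) := by
        rw [exp_add]; field_simp
    _ = 2 * exp (p ^ 2 + q ^ 2 + -z ^ 2) := by ring_nf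
    _ = 2 * exp (p ^ 2 + q ^ 2) * exp (-z ^ 2) := by rw [exp_add]; ring

lemma integral_Ioi_exp_neg_div_sq_add_mul_sq_div_one_add_sq {p q : ℝ} (hp : 0 ≤ p)
    (hq : 0 ≤ q) :
    ∫ u in Ioi (0:ℝ), exp (-(p ^ 2 / u ^ 2 + q ^ 2 * u ^ 2)) / (1 + u ^ 2) =
      π / 2 * exp (p ^ 2 + q ^ 2) * Erfc (p + q) := by
  set F : ℝ → ℝ → ℝ := fun u w => exp (-(p ^ 2 / u ^ 2 + q ^ 2 * u ^ 2)) * exp (-((1 + u ^ 2) * w))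
  have hlaplace : ∀ u, exp (-(p ^ 2 / u ^ 2 + q ^ 2 * u ^ 2)) / (1 + u ^ 2) =
      ∫ w in Ioi 0, F u w := fun u => by
    simp only [F, ← neg_mul]
    rw [integral_const_mul, integral_exp_mul_Ioi (by nlinarith) 0, mul_zero, exp_zero]
    field_simp
  have hF : Integrable (Function.uncurry F)
      ((volume.restrict (Ioi 0)).prod (volume.restrict (Ioi 0))) := by
    refine integrable_exp_neg_one_add_sq_mul.mono' (by fun_prop)
      (Filter.Eventually.of_forall fun z => ?_)
    rw [Function.uncurry_apply_pair, norm_of_nonneg (by positivity)]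
    exact mul_le_of_le_one_left (exp_pos _).le (exp_le_one_iff.2 (neg_nonpos.2 (by positivity)))
  have hinner : ∀ w ∈ Ioi (0:ℝ), ∫ u in Ioi 0, F u w =
      √π / 2 * (exp (-w) * (exp (-(2 * p * √(q ^ 2 + w))) / √(q ^ 2 + w))) := by
    intro w hw
    have hw : 0 < w := hw
    have hg : 0 < √(q ^ 2 + w) := sqrt_pos.2 (by positivity)
    have hsplit : ∀ u, F u w = exp (-w) * exp (-(p ^ 2 / u ^ 2 + √(q ^ 2 + w) ^ 2 * u ^ 2)) :=
      fun u => by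
        simp only [F]
        rw [sq_sqrt (by positivity), ← exp_add, ← exp_add]
        ring_nf
    simp only [hsplit]
    rw [integral_const_mul, integral_Ioi_exp_neg_sq_div_sq_add_sq_mul_sq hp hg]
    ring
  simp only [hlaplace]
  rw [integral_integral_swap hF, setIntegral_congr_fun measurableSet_Ioi hinner,
    integral_const_mul, integral_Ioi_exp_neg_mul_exp_neg_sqrt_div_sqrt hq, Erfc]
  have := sq_sqrt pi_pos.le
  field_simp
  linear_combination (∫ z in Ioi (p + q), exp (-z ^ 2)) * this

lemma integral_Ioo_zero_eq_integral_Ioi_comp_sq_div_one_add_sq {E : Type*} [NormedAddCommGroup E]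
    [NormedSpace ℝ E] {t : ℝ} (ht : 0 < t) (f : ℝ → E) :
    ∫ s in Ioo 0 t, f s =
      ∫ u in Ioi 0, (2 * t * u / (1 + u ^ 2) ^ 2) • f (t * u ^ 2 / (1 + u ^ 2)) := by
  have himage : (fun u : ℝ => t * u ^ 2 / (1 + u ^ 2)) '' Ioi 0 = Ioo 0 t := by
    refine Subset.antisymm ?_ fun s ⟨hs0, hst⟩ => ⟨√(s / (t - s)), ?_, ?_⟩
    · rintro _ ⟨u, hu, rfl⟩
      have hu : 0 < u := hu
      refine ⟨by positivity, ?_⟩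
      rw [div_lt_iff₀ (by positivity)]
      nlinarith
    · exact sqrt_pos.2 (div_pos hs0 (by linarith))
    · have hts : t - s ≠ 0 := by linarith
      dsimp only
      rw [sq_sqrt (div_pos hs0 (by linarith)).le]
      field_simp
      ring
  have hderiv : ∀ u ∈ Ioi (0:ℝ), HasDerivWithinAt (fun u : ℝ => t * u ^ 2 / (1 + u ^ 2))
      (2 * t * u / (1 + u ^ 2) ^ 2) (Ioi 0) u := by
    intro u _
    have hnum : HasDerivAt (fun u : ℝ => t * u ^ 2) (t * (2 * u)) u := by
      simpa using (hasDerivAt_pow 2 u).const_mul t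
    have hden : HasDerivAt (fun u : ℝ => 1 + u ^ 2) (2 * u) u := by
      simpa using (hasDerivAt_pow 2 u).const_add 1
    exact ((hnum.div hden (by positivity)).congr_deriv (by ring)).hasDerivWithinAt
  have hinj : InjOn (fun u : ℝ => t * u ^ 2 / (1 + u ^ 2)) (Ioi 0) := by
    intro a ha b hb hab
    rw [div_eq_div_iff (by positivity) (by positivity)] at hab
    exact (pow_left_inj₀ (le_of_lt ha) (le_of_lt hb) two_ne_zero).1 (by nlinarith)
  rw [← himage, integral_image_eq_integral_abs_deriv_smul measurableSet_Ioi hderiv hinj]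
  refine setIntegral_congr_fun measurableSet_Ioi fun u hu => ?_
  rw [abs_of_pos (by have : 0 < u := hu; positivity)]

lemma mul_heatKernel_mul_heatKernel_sub {ν σ t u : ℝ} (hν : 0 < ν) (hσ : 0 < σ) (ht : 0 < t)
    (hu : 0 < u) (x y : ℝ) :
    2 * t * u / (1 + u ^ 2) ^ 2 * (heatKernel ν (t * u ^ 2 / (1 + u ^ 2)) x *
        heatKernel σ (t - t * u ^ 2 / (1 + u ^ 2)) y) =
      1 / (π * √(ν * σ)) * exp (-(x ^ 2 / (2 * ν * t) + y ^ 2 / (2 * σ * t))) *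
        (exp (-(x ^ 2 / (2 * ν * t) / u ^ 2 + y ^ 2 / (2 * σ * t) * u ^ 2)) / (1 + u ^ 2)) := by
  have hsub : t - t * u ^ 2 / (1 + u ^ 2) = t / (1 + u ^ 2) := by field_simp; ring
  have hsqrtν : √(2 * π * ν * (t * u ^ 2 / (1 + u ^ 2))) = √(2 * π * ν * t) * u / √(1 + u ^ 2) := by
    rw [show 2 * π * ν * (t * u ^ 2 / (1 + u ^ 2)) = 2 * π * ν * t * u ^ 2 / (1 + u ^ 2) by ring,
      sqrt_div' _ (by positivity), sqrt_mul (by positivity), sqrt_sq hu.le]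
  have hsqrtσ : √(2 * π * σ * (t / (1 + u ^ 2))) = √(2 * π * σ * t) / √(1 + u ^ 2) := by
    rw [← mul_div_assoc, sqrt_div' _ (by positivity)]
  have hsqrt_mul : √(2 * π * ν * t) * √(2 * π * σ * t) = 2 * π * t * √(ν * σ) := by
    rw [← sqrt_mul (by positivity), show 2 * π * ν * t * (2 * π * σ * t) = (2 * π * t) ^ 2 * (ν * σ)
      by ring, sqrt_mul (by positivity), sqrt_sq (by positivity)]
  have hexpν : -x ^ 2 / (2 * ν * (t * u ^ 2 / (1 + u ^ 2))) =
      -(x ^ 2 / (2 * ν * t)) + -(x ^ 2 / (2 * ν * t) / u ^ 2) := by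
    field_simp; ring
  have hexpσ : -y ^ 2 / (2 * σ * (t / (1 + u ^ 2))) =
      -(y ^ 2 / (2 * σ * t)) + -(y ^ 2 / (2 * σ * t) * u ^ 2) := by
    field_simp; ring
  have hsq : √(1 + u ^ 2) ^ 2 = 1 + u ^ 2 := sq_sqrt (by positivity)
  rw [hsub, heatKernel, heatKernel, hsqrtν, hsqrtσ, hexpν, hexpσ, neg_add, neg_add, exp_add,
    exp_add, exp_add, exp_add]
  have hA : 0 < √(2 * π * ν * t) := sqrt_pos.2 (by positivity)
  have hB : 0 < √(2 * π * σ * t) := sqrt_pos.2 (by positivity)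
  have hC : 0 < √(ν * σ) := sqrt_pos.2 (by positivity)
  have hR : 0 < √(1 + u ^ 2) := sqrt_pos.2 (by positivity)
  generalize √(2 * π * ν * t) = A at *
  generalize √(2 * π * σ * t) = B at *
  generalize √(ν * σ) = C at *
  generalize √(1 + u ^ 2) = R at *
  field_simp
  linear_combination 2 * t * π * C * hsq - (1 + u ^ 2) * hsqrt_mul

theorem stmt_6 (ν σ t x y : ℝ) (hν : 0 < ν) (hσ : 0 < σ) (ht : 0 < t) :
    ∫ s in (0:ℝ)..t, heatKernel ν s x * heatKernel σ (t - s) y =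
      (1 / (2 * Real.sqrt (ν * σ))) *
        Erfc ((1 / Real.sqrt (2 * t)) *
          (|x| / Real.sqrt ν + |y| / Real.sqrt σ)) := by
  have hsqrtν : √(2 * ν * t) = √(2 * t) * √ν := by rw [← sqrt_mul (by positivity)]; ring_nf
  have hsqrtσ : √(2 * σ * t) = √(2 * t) * √σ := by rw [← sqrt_mul (by positivity)]; ring_nf
  set p := |x| / √(2 * ν * t)
  set q := |y| / √(2 * σ * t)
  have hp : p ^ 2 = x ^ 2 / (2 * ν * t) := by rw [div_pow, sq_abs, sq_sqrt (by positivity)]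
  have hq : q ^ 2 = y ^ 2 / (2 * σ * t) := by rw [div_pow, sq_abs, sq_sqrt (by positivity)]
  have harg : 1 / √(2 * t) * (|x| / √ν + |y| / √σ) = p + q := by
    simp only [p, q, hsqrtν, hsqrtσ]
    field_simp
  rw [intervalIntegral.integral_of_le ht.le, integral_Ioc_eq_integral_Ioo,
    integral_Ioo_zero_eq_integral_Ioi_comp_sq_div_one_add_sq ht]
  simp only [smul_eq_mul]
  rw [setIntegral_congr_fun measurableSet_Ioi
      fun u hu => mul_heatKernel_mul_heatKernel_sub hν hσ ht hu x y,
    ← hp, ← hq, integral_const_mul,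
    integral_Ioi_exp_neg_div_sq_add_mul_sq_div_one_add_sq (by positivity) (by positivity), harg]
  rw [exp_neg]
  field_simp
end

section
/- For all t > 0, ν > 0 and y ∈ ℝ, ∫₀ᵗ G_σ(t−s,y)/√(2πνs) ds = (1/(2√(νσ))) Erfc(|y|/√(2σt)) ≤ (√(πt)/√(2ν)) · G_σ(t,y). -/
/-!
The substitution `s = t v² / (1 + v²)` turns the time integral into
`e^{-x²} / (π √(νσ)) · ∫₀^∞ e^{-x² v²} / (1 + v²) dv` with `x = |y| / √(2σt)`.
Writing `1 / (1 + v²) = ∫₀^∞ e^{-(1 + v²) w} dw`, Fubini and the half-line Gaussian integral turn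
the last integral into `∫₀^∞ e^{-w} √(π / (x² + w)) / 2 dw`, and the substitution `w = u² - x²`
identifies this with `π / 2 · e^{x²} · Erfc x`. The inequality is `Erfc x ≤ e^{-x²}`, which follows
from `u² ≥ x² + (u - x)²` for `u ≥ x ≥ 0`.
-/

open Real MeasureTheory Set

lemma integral_Ioi_comp_add (x : ℝ) (f : ℝ → ℝ) :
    ∫ u in Ioi x, f u = ∫ v in Ioi 0, f (v + x) := by
  rw [show Ioi x = (· + x) '' Ioi 0 by simp, integral_image_eq_integral_abs_deriv_smul
    measurableSet_Ioi (fun v _ => ((hasDerivAt_id' v).add_const x).hasDerivWithinAt)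
    (add_left_injective x).injOn]
  simp

lemma integral_Ioi_eq_integral_Ioi_sq_sub {x : ℝ} (hx : 0 ≤ x) (f : ℝ → ℝ) :
    ∫ w in Ioi 0, f w = ∫ u in Ioi x, 2 * u * f (u ^ 2 - x ^ 2) := by
  have himage : (fun u => u ^ 2 - x ^ 2) '' Ioi x = Ioi 0 := by
    ext w
    simp only [mem_image, mem_Ioi]
    constructor
    · rintro ⟨u, hu, rfl⟩
      nlinarith
    · intro hw
      refine ⟨√(x ^ 2 + w), ?_, by rw [sq_sqrt (by positivity)]; ring⟩
      rw [lt_sqrt hx]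
      linarith
  rw [← himage, integral_image_eq_integral_abs_deriv_smul measurableSet_Ioi
    (fun u _ => ((hasDerivAt_pow 2 u).sub_const _).hasDerivWithinAt)
    (fun u hu v hv huv => by
      simp only [mem_Ioi] at hu hv
      nlinarith [huv])]
  refine setIntegral_congr_fun measurableSet_Ioi fun u hu => ?_
  simp only [mem_Ioi] at hu
  simp [abs_of_pos (show 0 < 2 * u by linarith)]

lemma integral_Ioo_eq_integral_Ioi_comp {t : ℝ} (ht : 0 < t) (f : ℝ → ℝ) :
    ∫ s in Ioo 0 t, f s
      = ∫ v in Ioi 0, 2 * t * v / (1 + v ^ 2) ^ 2 * f (t * v ^ 2 / (1 + v ^ 2)) := by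
  have himage : (fun v => t * v ^ 2 / (1 + v ^ 2)) '' Ioi 0 = Ioo 0 t := by
    ext s
    simp only [mem_image, mem_Ioi, mem_Ioo]
    constructor
    · rintro ⟨v, hv, rfl⟩
      refine ⟨by positivity, ?_⟩
      rw [div_lt_iff₀ (by positivity)]
      nlinarith
    · rintro ⟨hs, hst⟩
      have : 0 < t - s := by linarith
      refine ⟨√(s / (t - s)), by positivity, ?_⟩
      rw [sq_sqrt (by positivity)]
      field_simp
      ring
  have hderiv (v : ℝ) :
      HasDerivAt (fun v => t * v ^ 2 / (1 + v ^ 2)) (2 * t * v / (1 + v ^ 2) ^ 2) v := by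
    refine (((hasDerivAt_pow 2 v).const_mul t).div ((hasDerivAt_pow 2 v).const_add 1)
      (by positivity)).congr_deriv ?_
    norm_num
    ring
  have hinj : InjOn (fun v => t * v ^ 2 / (1 + v ^ 2)) (Ioi 0) := by
    intro v hv w hw hvw
    simp only [mem_Ioi] at hv hw
    rw [div_eq_div_iff (by positivity) (by positivity)] at hvw
    have : v ^ 2 = w ^ 2 := by nlinarith
    nlinarith
  rw [← himage, integral_image_eq_integral_abs_deriv_smul measurableSet_Ioi
    (fun v _ => (hderiv v).hasDerivWithinAt) hinj]
  refine setIntegral_congr_fun measurableSet_Ioi fun v hv => ?_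
  simp only [mem_Ioi] at hv
  simp [abs_of_pos (show 0 < 2 * t * v / (1 + v ^ 2) ^ 2 by positivity)]

lemma integral_exp_neg_mul_Ioi {c : ℝ} (hc : 0 < c) : ∫ w in Ioi 0, exp (-(c * w)) = 1 / c := by
  simpa [neg_mul] using integral_exp_mul_Ioi (neg_neg_of_pos hc) 0

lemma integral_exp_neg_mul_sq_mul_exp_neg_mul (x v : ℝ) :
    ∫ w in Ioi 0, exp (-(x ^ 2 * v ^ 2)) * exp (-((1 + v ^ 2) * w))
      = exp (-(x ^ 2 * v ^ 2)) / (1 + v ^ 2) := by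
  rw [integral_const_mul, integral_exp_neg_mul_Ioi (by positivity), mul_one_div]

lemma integrable_exp_neg_mul_sq_mul_exp_neg_mul (x : ℝ) :
    Integrable (fun p : ℝ × ℝ => exp (-(x ^ 2 * p.1 ^ 2)) * exp (-((1 + p.1 ^ 2) * p.2)))
      ((volume.restrict (Ioi 0)).prod (volume.restrict (Ioi 0))) := by
  have hmeas : AEStronglyMeasurable
      (fun p : ℝ × ℝ => exp (-(x ^ 2 * p.1 ^ 2)) * exp (-((1 + p.1 ^ 2) * p.2)))
      ((volume.restrict (Ioi 0)).prod (volume.restrict (Ioi 0))) :=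
    (by fun_prop : Continuous _).aestronglyMeasurable
  refine (integrable_prod_iff hmeas).2 ⟨.of_forall fun v => ?_, ?_⟩
  · simpa only [neg_mul] using (exp_neg_integrableOn_Ioi 0 (by positivity : 0 < 1 + v ^ 2)).const_mul
      (exp (-(x ^ 2 * v ^ 2)))
  · refine integrable_inv_one_add_sq.integrableOn.mono' hmeas.norm.integral_prod_right'
      (.of_forall fun v => ?_)
    simp only [norm_mul, Real.norm_eq_abs, abs_exp]
    rw [integral_exp_neg_mul_sq_mul_exp_neg_mul, abs_of_pos (by positivity), div_eq_mul_inv]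
    exact mul_le_of_le_one_left (by positivity) (exp_le_one_iff.2 (by nlinarith [sq_nonneg (x * v)]))

lemma integral_exp_neg_mul_sq_div_one_add_sq {x : ℝ} (hx : 0 ≤ x) :
    ∫ v in Ioi 0, exp (-(x ^ 2 * v ^ 2)) / (1 + v ^ 2) = π / 2 * exp (x ^ 2) * Erfc x := by
  have hgauss (w : ℝ) :
      ∫ v in Ioi 0, exp (-(x ^ 2 * v ^ 2)) * exp (-((1 + v ^ 2) * w))
        = exp (-w) * (√(π / (x ^ 2 + w)) / 2) := by
    rw [← integral_gaussian_Ioi, ← integral_const_mul]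
    congr 1 with v
    rw [← exp_add, ← exp_add]
    ring_nf
  calc ∫ v in Ioi 0, exp (-(x ^ 2 * v ^ 2)) / (1 + v ^ 2)
      = ∫ v in Ioi 0, ∫ w in Ioi 0, exp (-(x ^ 2 * v ^ 2)) * exp (-((1 + v ^ 2) * w)) := by
        simp_rw [integral_exp_neg_mul_sq_mul_exp_neg_mul]
    _ = ∫ w in Ioi 0, ∫ v in Ioi 0, exp (-(x ^ 2 * v ^ 2)) * exp (-((1 + v ^ 2) * w)) :=
        integral_integral_swap (integrable_exp_neg_mul_sq_mul_exp_neg_mul x)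
    _ = ∫ w in Ioi 0, exp (-w) * (√(π / (x ^ 2 + w)) / 2) := by simp_rw [hgauss]
    _ = ∫ u in Ioi x, 2 * u * (exp (-(u ^ 2 - x ^ 2)) * (√(π / (x ^ 2 + (u ^ 2 - x ^ 2))) / 2)) :=
        integral_Ioi_eq_integral_Ioi_sq_sub hx _
    _ = ∫ u in Ioi x, √π * exp (x ^ 2) * exp (-u ^ 2) := by
        refine setIntegral_congr_fun measurableSet_Ioi fun u hu => ?_
        have hu : 0 < u := hx.trans_lt hu
        rw [add_sub_cancel, sqrt_div pi_nonneg, sqrt_sq hu.le, neg_sub, sub_eq_add_neg, exp_add]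
        field_simp
    _ = π / 2 * exp (x ^ 2) * Erfc x := by
        rw [integral_const_mul, Erfc]
        field_simp
        rw [sq_sqrt pi_nonneg, mul_comm]

lemma erfc_le_exp_neg_sq {x : ℝ} (hx : 0 ≤ x) : Erfc x ≤ exp (-x ^ 2) := by
  have hgauss : Integrable fun v : ℝ => exp (-v ^ 2) := by
    simpa using integrable_exp_neg_mul_sq one_pos
  have hbound : ∫ u in Ioi x, exp (-u ^ 2) ≤ exp (-x ^ 2) * (√π / 2) :=
    calc ∫ u in Ioi x, exp (-u ^ 2) = ∫ v in Ioi 0, exp (-(v + x) ^ 2) := integral_Ioi_comp_add x _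
      _ ≤ ∫ v in Ioi 0, exp (-x ^ 2) * exp (-v ^ 2) := by
          refine setIntegral_mono_on (hgauss.comp_add_right x).integrableOn
            (hgauss.const_mul _).integrableOn measurableSet_Ioi fun v hv => ?_
          rw [← exp_add, exp_le_exp]
          nlinarith [mem_Ioi.mp hv]
      _ = exp (-x ^ 2) * (√π / 2) := by
          rw [integral_const_mul]
          simpa using integral_gaussian_Ioi 1
  calc Erfc x ≤ 2 / √π * (exp (-x ^ 2) * (√π / 2)) := by
        rw [Erfc]
        gcongr
    _ = exp (-x ^ 2) := by field_simp

lemma mul_heatKernel_sub_div_sqrt_eq {ν σ t : ℝ} (hν : 0 < ν) (hσ : 0 < σ) (ht : 0 < t) (y : ℝ)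
    {v : ℝ} (hv : 0 < v) :
    2 * t * v / (1 + v ^ 2) ^ 2 *
        (heatKernel σ (t - t * v ^ 2 / (1 + v ^ 2)) y / √(2 * π * ν * (t * v ^ 2 / (1 + v ^ 2))))
      = exp (-(y ^ 2 / (2 * σ * t))) / (π * √(ν * σ))
          * (exp (-(y ^ 2 / (2 * σ * t) * v ^ 2)) / (1 + v ^ 2)) := by
  set r := 1 + v ^ 2
  have hr : 0 < r := by positivity
  have hsub : t - t * v ^ 2 / r = t / r := by field_simp; ring
  have hexp : exp (-y ^ 2 / (2 * σ * (t / r)))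
      = exp (-(y ^ 2 / (2 * σ * t))) * exp (-(y ^ 2 / (2 * σ * t) * v ^ 2)) := by
    rw [← exp_add]; congr 1; field_simp; ring
  have hsqrtσ : √(2 * π * σ * (t / r)) = √(2 * π * σ * t) / √r := by
    rw [mul_div_assoc', sqrt_div (by positivity)]
  have hsqrtν : √(2 * π * ν * (t * v ^ 2 / r)) = √(2 * π * ν * t) * v / √r := by
    rw [show 2 * π * ν * (t * v ^ 2 / r) = 2 * π * ν * t * v ^ 2 / r by ring,
      sqrt_div (by positivity), sqrt_mul (by positivity), sqrt_sq hv.le]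
  have hprod : √(2 * π * σ * t) * √(2 * π * ν * t) = 2 * π * t * √(ν * σ) := by
    rw [← sqrt_mul (by positivity), show 2 * π * σ * t * (2 * π * ν * t)
      = (2 * π * t) ^ 2 * (ν * σ) by ring, sqrt_mul (by positivity), sqrt_sq (by positivity)]
  have hr' : √r * √r = r := mul_self_sqrt hr.le
  rw [hsub, heatKernel, hexp, hsqrtσ, hsqrtν]
  have : 0 < √(ν * σ) := by positivity
  have : 0 < √r := by positivity
  have : 0 < √(2 * π * σ * t) := by positivity
  have : 0 < √(2 * π * ν * t) := by positivity
  generalize √(ν * σ) = c, √r = s, √(2 * π * σ * t) = a, √(2 * π * ν * t) = b at *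
  field_simp
  linear_combination (2 * t * π * c) * hr' - r * hprod

lemma abs_div_sqrt_sq {c : ℝ} (hc : 0 ≤ c) (y : ℝ) : (|y| / √c) ^ 2 = y ^ 2 / c := by
  rw [div_pow, sq_abs, sq_sqrt hc]

lemma integral_heatKernel_div_sqrt {ν σ t : ℝ} (hν : 0 < ν) (hσ : 0 < σ) (ht : 0 < t) (y : ℝ) :
    ∫ s in (0:ℝ)..t, heatKernel σ (t - s) y / √(2 * π * ν * s)
      = 1 / (2 * √(ν * σ)) * Erfc (|y| / √(2 * σ * t)) := by
  set x := |y| / √(2 * σ * t)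
  have hx2 : y ^ 2 / (2 * σ * t) = x ^ 2 := (abs_div_sqrt_sq (by positivity) y).symm
  calc ∫ s in (0:ℝ)..t, heatKernel σ (t - s) y / √(2 * π * ν * s)
      = ∫ s in Ioo 0 t, heatKernel σ (t - s) y / √(2 * π * ν * s) := by
        rw [intervalIntegral.integral_of_le ht.le, integral_Ioc_eq_integral_Ioo]
    _ = ∫ v in Ioi 0, 2 * t * v / (1 + v ^ 2) ^ 2 * (heatKernel σ (t - t * v ^ 2 / (1 + v ^ 2)) y
          / √(2 * π * ν * (t * v ^ 2 / (1 + v ^ 2)))) :=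
        integral_Ioo_eq_integral_Ioi_comp ht _
    _ = ∫ v in Ioi 0, exp (-x ^ 2) / (π * √(ν * σ)) * (exp (-(x ^ 2 * v ^ 2)) / (1 + v ^ 2)) :=
        setIntegral_congr_fun measurableSet_Ioi fun v hv => by
          rw [mul_heatKernel_sub_div_sqrt_eq hν hσ ht y hv, hx2]
    _ = exp (-x ^ 2) / (π * √(ν * σ)) * (π / 2 * exp (x ^ 2) * Erfc x) := by
        rw [integral_const_mul, integral_exp_neg_mul_sq_div_one_add_sq (by positivity)]
    _ = 1 / (2 * √(ν * σ)) * Erfc x := by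
        rw [exp_neg]
        field_simp

lemma sqrt_div_sqrt_mul_heatKernel {ν σ t : ℝ} (hν : 0 < ν) (hσ : 0 < σ) (ht : 0 < t) (y : ℝ) :
    √(π * t) / √(2 * ν) * heatKernel σ t y = 1 / (2 * √(ν * σ)) * exp (-(y ^ 2 / (2 * σ * t))) := by
  have hprod : √(2 * ν) * √(2 * π * σ * t) = 2 * √(ν * σ) * √(π * t) := by
    rw [← sqrt_mul (by positivity), show 2 * ν * (2 * π * σ * t)
      = 2 ^ 2 * (ν * σ * (π * t)) by ring, sqrt_mul (by positivity), sqrt_sq zero_le_two,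
      sqrt_mul (by positivity), mul_assoc]
  have : 0 < √(ν * σ) := by positivity
  have : 0 < √(π * t) := by positivity
  have : 0 < √(2 * ν) := by positivity
  have : 0 < √(2 * π * σ * t) := by positivity
  rw [heatKernel, neg_div]
  generalize √(ν * σ) = c, √(π * t) = p, √(2 * ν) = n, √(2 * π * σ * t) = q at *
  field_simp
  linear_combination -hprod

theorem stmt_7 (ν σ t y : ℝ) (hν : 0 < ν) (hσ : 0 < σ) (ht : 0 < t) :
    (∫ s in (0:ℝ)..t, heatKernel σ (t - s) y / Real.sqrt (2 * Real.pi * ν * s)) =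
      (1 / (2 * Real.sqrt (ν * σ))) * Erfc (|y| / Real.sqrt (2 * σ * t)) ∧
    (1 / (2 * Real.sqrt (ν * σ))) * Erfc (|y| / Real.sqrt (2 * σ * t)) ≤
      (Real.sqrt (Real.pi * t) / Real.sqrt (2 * ν)) * heatKernel σ t y := by
  refine ⟨integral_heatKernel_div_sqrt hν hσ ht y, ?_⟩
  rw [sqrt_div_sqrt_mul_heatKernel hν hσ ht, ← abs_div_sqrt_sq (by positivity)]
  gcongr
  exact erfc_le_exp_neg_sq (by positivity)
end

section
/- For t > 0, ν > 0 and x ∈ ℝ, ∫₀ᵗ G_ν(s,x) ds = 2t·G_ν(t,x) − (|x|/ν)·Erfc(|x|/√(2νt)). -/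
/-!
On `s > 0`, `F s = 2 s G_ν(s,x) − (|x|/ν) Erfc(|x|/√(2νs))` is an antiderivative of `G_ν(·,x)`:
differentiating the Erfc term through the similarity variable `|x|/√(2νs)` gives exactly the
`x²/(νs) · G_ν` produced by `∂ₛ(2s G_ν)`. As `s → 0⁺`, `s G_ν(s,x) = O(√s)` and the Erfc argument
tends to `+∞`, so `F → 0`. The fundamental theorem of calculus is applied with `F 0` replaced by
this limit (Lean's `F 0` is `−(|x|/ν) Erfc 0`, as `√0 = 0`); integrability of the kernel near `0`
comes for free because it is a nonnegative derivative.
-/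

open Real Set Filter Topology MeasureTheory intervalIntegral

lemma integrable_exp_neg_sq : Integrable fun u : ℝ => exp (-u ^ 2) := by
  simpa using integrable_exp_neg_mul_sq one_pos

lemma integral_Ioi_zero_exp_neg_sq : ∫ u in Ioi (0 : ℝ), exp (-u ^ 2) = √π / 2 := by
  simpa using integral_gaussian_Ioi 1

lemma Erfc_eq_one_sub (y : ℝ) :
    Erfc y = 1 - 2 / √π * ∫ u in (0 : ℝ)..y, exp (-u ^ 2) := by
  have hsplit := integral_Ioi_sub_Ioi' integrable_exp_neg_sq.integrableOn
    integrable_exp_neg_sq.integrableOn (a := 0) (b := y)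
  have : √π ≠ 0 := by positivity
  rw [Erfc, ← hsplit, integral_Ioi_zero_exp_neg_sq]
  field_simp
  ring

lemma hasDerivAt_Erfc (y : ℝ) : HasDerivAt Erfc (-(2 / √π) * exp (-y ^ 2)) y := by
  have hc : Continuous fun u : ℝ => exp (-u ^ 2) := by fun_prop
  have hprim : HasDerivAt (fun y => ∫ u in (0 : ℝ)..y, exp (-u ^ 2)) (exp (-y ^ 2)) y :=
    integral_hasDerivAt_right (hc.intervalIntegrable _ _) (hc.stronglyMeasurableAtFilter _ _)
      hc.continuousAt
  rw [funext Erfc_eq_one_sub]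
  simpa using (hprim.const_mul (2 / √π)).const_sub 1

lemma tendsto_Erfc_atTop : Tendsto Erfc atTop (𝓝 0) := by
  have h := intervalIntegral_tendsto_integral_Ioi 0 integrable_exp_neg_sq.integrableOn tendsto_id
  rw [integral_Ioi_zero_exp_neg_sq] at h
  have : √π ≠ 0 := by positivity
  have hlim := (h.const_mul (2 / √π)).const_sub 1
  rw [show (1 : ℝ) - 2 / √π * (√π / 2) = 0 by field_simp; norm_num] at hlim
  rw [funext Erfc_eq_one_sub]
  exact hlim

lemma heatKernel_nonneg (ν s x : ℝ) : 0 ≤ heatKernel ν s x := by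
  unfold heatKernel; positivity

lemma hasDerivAt_sqrt_const_mul {c s : ℝ} (hcs : 0 < c * s) :
    HasDerivAt (fun s => √(c * s)) (c / (2 * √(c * s))) s := by
  simpa using ((hasDerivAt_id s).const_mul c).sqrt hcs.ne'

lemma hasDerivAt_heatKernel_time {ν s : ℝ} (x : ℝ) (hν : 0 < ν) (hs : 0 < s) :
    HasDerivAt (fun s => heatKernel ν s x)
      ((x ^ 2 / (2 * ν * s ^ 2) - 1 / (2 * s)) * heatKernel ν s x) s := by
  have hsqrt := hasDerivAt_sqrt_const_mul (c := 2 * π * ν) (s := s) (by positivity)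
  have harg : HasDerivAt (fun s => -(x ^ 2) / (2 * ν * s)) (x ^ 2 / (2 * ν * s ^ 2)) s := by
    have := (hasDerivAt_const s (-(x ^ 2))).fun_div ((hasDerivAt_id s).const_mul (2 * ν))
      (by positivity)
    refine this.congr_deriv ?_
    simp only [id]
    field_simp
    ring
  have hfun : (fun s => heatKernel ν s x) =
      fun s => exp (-(x ^ 2) / (2 * ν * s)) / √(2 * π * ν * s) := by
    funext s
    rw [heatKernel, one_div_mul_eq_div]
  rw [hfun]
  refine (harg.exp.fun_div hsqrt (by positivity)).congr_deriv ?_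
  rw [heatKernel]
  field_simp
  rw [Real.sq_sqrt (by positivity)]
  ring

lemma hasDerivAt_Erfc_similarity {ν s : ℝ} (x : ℝ) (hν : 0 < ν) (hs : 0 < s) :
    HasDerivAt (fun s => |x| / ν * Erfc (|x| / √(2 * ν * s)))
      (x ^ 2 / (ν * s) * heatKernel ν s x) s := by
  have hc : 0 < 2 * ν * s := by positivity
  have hy := (hasDerivAt_const s |x|).fun_div (hasDerivAt_sqrt_const_mul hc) (by positivity)
  have hsq : (|x| / √(2 * ν * s)) ^ 2 = x ^ 2 / (2 * ν * s) := by
    rw [div_pow, sq_abs, Real.sq_sqrt hc.le]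
  refine (((hasDerivAt_Erfc _).comp s hy).const_mul (|x| / ν)).congr_deriv ?_
  rw [hsq, heatKernel, neg_div, show 2 * π * ν * s = π * (2 * ν * s) by ring,
    Real.sqrt_mul Real.pi_pos.le]
  field_simp
  rw [Real.sq_sqrt (by positivity)]
  linear_combination (2 * ν * s) * sq_abs x

lemma hasDerivAt_heatKernel_primitive {ν s : ℝ} (x : ℝ) (hν : 0 < ν) (hs : 0 < s) :
    HasDerivAt (fun s => 2 * s * heatKernel ν s x - |x| / ν * Erfc (|x| / √(2 * ν * s)))
      (heatKernel ν s x) s := by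
  refine ((((hasDerivAt_id s).const_mul 2).mul (hasDerivAt_heatKernel_time x hν hs)).sub
    (hasDerivAt_Erfc_similarity x hν hs)).congr_deriv ?_
  simp only [id]
  field_simp
  ring

theorem integral_eq_sub_of_hasDerivAt_of_tendsto_of_nonneg {f f' : ℝ → ℝ} {a b fa : ℝ}
    (hab : a < b) (hderiv : ∀ x ∈ Ioc a b, HasDerivAt f (f' x) x)
    (hpos : ∀ x ∈ Ioo a b, 0 ≤ f' x) (ha : Tendsto f (𝓝[>] a) (𝓝 fa)) :
    ∫ y in a..b, f' y = f b - fa := by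
  classical
  set g := Function.update f a fa
  have hgf : ∀ x ∈ Ioc a b, g =ᶠ[𝓝 x] f := fun x hx => by
    filter_upwards [Ioi_mem_nhds hx.1] with y hy using Function.update_of_ne hy.ne' ..
  have hcont : ContinuousOn g (Icc a b) := by
    intro x hx
    rcases hx.1.eq_or_lt with rfl | hax
    · rw [continuousWithinAt_update_same]
      exact ha.mono_left (nhdsWithin_mono _ fun y hy => hy.1.1.lt_of_ne' hy.2)
    · exact ((hderiv x ⟨hax, hx.2⟩).continuousAt.congr
        (hgf x ⟨hax, hx.2⟩).symm).continuousWithinAt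
  have hderiv' : ∀ x ∈ Ioo a b, HasDerivAt g (f' x) x := fun x hx =>
    (hderiv x (Ioo_subset_Ioc_self hx)).congr_of_eventuallyEq (hgf x (Ioo_subset_Ioc_self hx))
  have hint : IntervalIntegrable f' volume a b :=
    (intervalIntegrable_iff_integrableOn_Ioc_of_le hab.le).2
      (integrableOn_deriv_of_nonneg hcont hderiv' hpos)
  simpa [g, hab.ne'] using integral_eq_sub_of_hasDerivAt_of_le hab.le hcont hderiv' hint

lemma mul_heatKernel_le {ν s : ℝ} (x : ℝ) (hν : 0 ≤ ν) (hs : 0 ≤ s) :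
    s * heatKernel ν s x ≤ √s / √(2 * π * ν) := by
  have hexp : exp (-(x ^ 2) / (2 * ν * s)) ≤ 1 := by
    rw [exp_le_one_iff, neg_div, neg_nonpos]
    positivity
  calc s * heatKernel ν s x ≤ s * (1 / √(2 * π * ν * s)) := by
        rw [heatKernel]
        gcongr
        exact mul_le_of_le_one_right (by positivity) hexp
    _ = √s / √(2 * π * ν) := by
        rw [Real.sqrt_mul (by positivity), mul_one_div, mul_comm (√(2 * π * ν)), ← div_div,
          Real.div_sqrt]

lemma tendsto_mul_heatKernel_nhdsGT_zero {ν : ℝ} (x : ℝ) (hν : 0 ≤ ν) :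
    Tendsto (fun s => s * heatKernel ν s x) (𝓝[>] 0) (𝓝 0) := by
  have hbound : Tendsto (fun s => √s / √(2 * π * ν)) (𝓝[>] 0) (𝓝 0) := by
    simpa using ((continuous_sqrt.div_const _).tendsto 0).mono_left nhdsWithin_le_nhds
  refine tendsto_of_tendsto_of_tendsto_of_le_of_le' tendsto_const_nhds hbound ?_ ?_
  all_goals filter_upwards [self_mem_nhdsWithin] with s hs
  · exact mul_nonneg (le_of_lt hs) (heatKernel_nonneg ν s x)
  · exact mul_heatKernel_le x hν (le_of_lt hs)

lemma tendsto_Erfc_similarity_nhdsGT_zero {ν x : ℝ} (hν : 0 < ν) (hx : x ≠ 0) :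
    Tendsto (fun s => Erfc (|x| / √(2 * ν * s))) (𝓝[>] 0) (𝓝 0) := by
  have hsqrt : Tendsto (fun s => √(2 * ν * s)) (𝓝[>] 0) (𝓝[>] 0) := by
    refine tendsto_nhdsWithin_iff.2 ⟨?_, ?_⟩
    · simpa using ((by fun_prop : Continuous fun s : ℝ => √(2 * ν * s)).tendsto 0).mono_left
        nhdsWithin_le_nhds
    · filter_upwards [self_mem_nhdsWithin] with s (hs : 0 < s)
      exact Real.sqrt_pos.2 (by positivity)
  simp only [div_eq_mul_inv]
  exact tendsto_Erfc_atTop.comp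
    (Tendsto.const_mul_atTop (abs_pos.2 hx) hsqrt.inv_tendsto_nhdsGT_zero)

lemma tendsto_heatKernel_primitive_nhdsGT_zero {ν : ℝ} (x : ℝ) (hν : 0 < ν) :
    Tendsto (fun s => 2 * s * heatKernel ν s x - |x| / ν * Erfc (|x| / √(2 * ν * s)))
      (𝓝[>] 0) (𝓝 0) := by
  have hErfc : Tendsto (fun s => |x| / ν * Erfc (|x| / √(2 * ν * s))) (𝓝[>] 0) (𝓝 0) := by
    rcases eq_or_ne x 0 with rfl | hx
    · simp
    · simpa using (tendsto_Erfc_similarity_nhdsGT_zero hν hx).const_mul (|x| / ν)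
  simpa [mul_assoc] using ((tendsto_mul_heatKernel_nhdsGT_zero x hν.le).const_mul 2).sub hErfc

theorem stmt_10 (ν t x : ℝ) (hν : 0 < ν) (ht : 0 < t) :
    ∫ s in (0:ℝ)..t, heatKernel ν s x =
      2 * t * heatKernel ν t x - (|x| / ν) * Erfc (|x| / Real.sqrt (2 * ν * t)) := by
  simpa using integral_eq_sub_of_hasDerivAt_of_tendsto_of_nonneg ht
    (fun s hs => hasDerivAt_heatKernel_primitive x hν hs.1)
    (fun s _ => heatKernel_nonneg ν s x) (tendsto_heatKernel_primitive_nhdsGT_zero x hν)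
end

section
/- For all 0 ≤ t < t', ∫₀ᵗ [ (s(t−s))^{-1/2} + (s(t'−s))^{-1/2} − 2(s((t+t')/2 − s))^{-1/2} ] ds (in absolute value of the integrand pointwise) is at most π − 2 arctan(√(t/(t'−t))), using ∫₀ᵗ (s(t'−s))^{-1/2} ds = 2 arctan(√(t/(t'−t))). -/
/-!
On `(0, T)` the function `2 * arcsin √(s / T)` is an antiderivative of `1 / √(s * (T - s))`.
It is continuous on all of `ℝ` and increasing, so the fundamental theorem of calculus reaches the
singular endpoints, giving integrability and `∫₀ᵃ = 2 * arcsin √(a / T)` for `0 ≤ a ≤ T`: this is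
`π` for `a = T` and `2 * arctan √(a / (T - a))` for `a < T`. Since `1 / √(s * (T - s))` decreases in `T`,
the midpoint term lies between the other two, so the integrand is at most
`1 / √(s * (t - s)) - 1 / √(s * (t' - s))`, whose integral is `π - 2 * arctan √(t / (t' - t))`.
-/

open Real intervalIntegral MeasureTheory Set

lemma hasDerivAt_two_mul_arcsin_sqrt_div {T s : ℝ} (hs : 0 < s) (hsT : s < T) :
    HasDerivAt (fun x => 2 * arcsin √(x / T)) (1 / √(s * (T - s))) s := by
  have hT : 0 < T := hs.trans hsT
  have hsqrt : HasDerivAt (fun x => √(x / T)) (1 / (2 * √(s / T)) * (1 / T)) s :=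
    (hasDerivAt_sqrt (div_pos hs hT).ne').comp s ((hasDerivAt_id s).div_const T)
  have hlt : √(s / T) < 1 := by
    rw [sqrt_lt' one_pos, one_pow, div_lt_one hT]; exact hsT
  have harcsin := ((hasDerivAt_arcsin (by linarith [sqrt_nonneg (s / T)]) hlt.ne).comp s
    hsqrt).const_mul 2
  refine harcsin.congr_deriv ?_
  rw [sq_sqrt (div_pos hs hT).le, one_sub_div hT.ne', sqrt_div hs.le, sqrt_div (by linarith),
    sqrt_mul hs.le]
  have hTT : √T ^ 2 = T := sq_sqrt hT.le
  have : 0 < √s := sqrt_pos.2 hs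
  have : 0 < √(T - s) := sqrt_pos.2 (by linarith)
  have : 0 < √T := sqrt_pos.2 hT
  field_simp
  linear_combination hTT

lemma arcsin_sqrt_div_eq_arctan_sqrt_div_sub {a T : ℝ} (ha : 0 ≤ a) (haT : a < T) :
    arcsin √(a / T) = arctan √(a / (T - a)) := by
  have hTa : 0 < T - a := by linarith
  have hT : T ≠ 0 := by linarith
  rw [arctan_eq_arcsin, sq_sqrt (div_nonneg ha hTa.le), ← sqrt_div' _ (by positivity)]
  congr 2
  field_simp
  ring

lemma integral_mono_of_nonneg_on_Ioo {f g : ℝ → ℝ} {a b : ℝ} (hab : a ≤ b)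
    (hf : ∀ x ∈ Ioo a b, 0 ≤ f x) (h : ∀ x ∈ Ioo a b, f x ≤ g x)
    (hg : IntervalIntegrable g volume a b) :
    ∫ x in a..b, f x ≤ ∫ x in a..b, g x := by
  rw [integral_of_le hab, integral_of_le hab, integral_Ioc_eq_integral_Ioo,
    integral_Ioc_eq_integral_Ioo]
  exact setIntegral_mono_of_nonneg hf h (hg.1.mono_set Ioo_subset_Ioc_self)

lemma continuous_two_mul_arcsin_sqrt_div (T : ℝ) : Continuous fun x => 2 * arcsin √(x / T) := by
  fun_prop

section

variable {T a : ℝ}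

lemma intervalIntegrable_one_div_sqrt_mul_sub (ha : 0 ≤ a) (haT : a ≤ T) :
    IntervalIntegrable (fun s => 1 / √(s * (T - s))) volume 0 a :=
  intervalIntegrable_deriv_of_nonneg (continuous_two_mul_arcsin_sqrt_div T).continuousOn
    (fun s hs => by
      rw [min_eq_left ha, max_eq_right ha] at hs
      exact hasDerivAt_two_mul_arcsin_sqrt_div hs.1 (hs.2.trans_le haT))
    (fun _ _ => by positivity)

lemma integral_one_div_sqrt_mul_sub (ha : 0 ≤ a) (haT : a ≤ T) :
    ∫ s in (0:ℝ)..a, 1 / √(s * (T - s)) = 2 * arcsin √(a / T) := by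
  rw [integral_eq_sub_of_hasDerivAt_of_le ha
    (continuous_two_mul_arcsin_sqrt_div T).continuousOn
    (fun s hs => hasDerivAt_two_mul_arcsin_sqrt_div hs.1 (hs.2.trans_le haT))
    (intervalIntegrable_one_div_sqrt_mul_sub ha haT)]
  simp

end

lemma integral_one_div_sqrt_mul_sub_self {t : ℝ} (ht : 0 < t) :
    ∫ s in (0:ℝ)..t, 1 / √(s * (t - s)) = π := by
  rw [integral_one_div_sqrt_mul_sub ht.le le_rfl, div_self ht.ne', sqrt_one, arcsin_one]
  ring

lemma one_div_sqrt_mul_sub_le {s T T' : ℝ} (hs : 0 < s) (hsT : s < T) (hTT' : T ≤ T') :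
    1 / √(s * (T' - s)) ≤ 1 / √(s * (T - s)) := by
  have : 0 < T - s := by linarith
  gcongr

lemma abs_add_sub_two_mul_le_sub {x y z : ℝ} (hyz : y ≤ z) (hzx : z ≤ x) :
    |x + y - 2 * z| ≤ x - y :=
  abs_le.2 ⟨by linarith, by linarith⟩

theorem stmt_13 (t t' : ℝ) (ht : 0 ≤ t) (htt' : t < t') :
    (∫ s in (0:ℝ)..t, 1 / Real.sqrt (s * (t' - s)) =
      2 * Real.arctan (Real.sqrt (t / (t' - t)))) ∧
    (∫ s in (0:ℝ)..t,
        |1 / Real.sqrt (s * (t - s)) + 1 / Real.sqrt (s * (t' - s)) -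
          2 / Real.sqrt (s * ((t + t') / 2 - s))|) ≤
      Real.pi - 2 * Real.arctan (Real.sqrt (t / (t' - t))) := by
  have hvalue : ∫ s in (0:ℝ)..t, 1 / √(s * (t' - s)) = 2 * arctan √(t / (t' - t)) := by
    rw [integral_one_div_sqrt_mul_sub ht htt'.le, arcsin_sqrt_div_eq_arctan_sqrt_div_sub ht htt']
  refine ⟨hvalue, ?_⟩
  rcases ht.eq_or_lt with rfl | ht0
  · simp [pi_pos.le]
  have hbound : ∀ s ∈ Ioo 0 t, |1 / √(s * (t - s)) + 1 / √(s * (t' - s)) -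
      2 / √(s * ((t + t') / 2 - s))| ≤ 1 / √(s * (t - s)) - 1 / √(s * (t' - s)) := by
    rintro s ⟨hs, hst⟩
    rw [div_eq_mul_one_div 2]
    exact abs_add_sub_two_mul_le_sub (one_div_sqrt_mul_sub_le hs (by linarith) (by linarith))
      (one_div_sqrt_mul_sub_le hs hst (by linarith))
  have hf := intervalIntegrable_one_div_sqrt_mul_sub ht le_rfl
  have hg := intervalIntegrable_one_div_sqrt_mul_sub ht htt'.le
  calc _ ≤ ∫ s in (0:ℝ)..t, (1 / √(s * (t - s)) - 1 / √(s * (t' - s))) :=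
        integral_mono_of_nonneg_on_Ioo ht (fun _ _ => abs_nonneg _) hbound (hf.sub hg)
    _ = π - 2 * arctan √(t / (t' - t)) := by
        rw [integral_sub hf hg, integral_one_div_sqrt_mul_sub_self ht0, hvalue]
end

section
/- Fix ν > 0, t > 0, n > 1, x ∈ ℝ. Then for all r ∈ [0, n²t], |G_{ν/2}(t+r,x)/G_{ν/2}(t,x) − 1| ≤ (3r/(t+r))·exp(n²x²/(νt(1+n²))) ≤ (3/2)·√(r(1+n²))/√t · G_{ν/2}(t,x)^{-1} · G_{ν(1+n²)/2}(t,x). -/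
lemma hk_eq (ν t x : ℝ) : heatKernel (ν/2) t x
    = 1/Real.sqrt (Real.pi*ν*t) * Real.exp (-(x^2)/(ν*t)) := by
  unfold heatKernel
  rw [show 2*Real.pi*(ν/2)*t = Real.pi*ν*t by ring,
      show 2*(ν/2)*t = ν*t by ring]

lemma aux_abs (s e : ℝ) (hs0 : 0 < s) (hs1 : s ≤ 1) (he : 1 ≤ e) :
    |s * e - 1| ≤ s * (e - 1) + (1 - s) := by
  rw [abs_le]
  constructor <;> nlinarith

lemma aux1 (u v : ℝ) (hu : 0 < u) (huv : u ≤ v) :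
    1 - u / v ≤ (v ^ 2 - u ^ 2) / v ^ 2 := by
  have hv0 : 0 < v := lt_of_lt_of_le hu huv
  have heq : (v ^ 2 - u ^ 2) / v ^ 2 - (1 - u / v) = u * (v - u) / v ^ 2 := by
    field_simp
    ring
  have hpos : 0 ≤ u * (v - u) / v ^ 2 :=
    div_nonneg (mul_nonneg hu.le (by linarith)) (sq_nonneg v)
  linarith

lemma aux_conv (A B c : ℝ) (hA0 : 0 ≤ A) (hB0 : 0 ≤ B) (hAB : A ≤ B)
    (hc0 : 0 ≤ c) (hAcB : A ≤ c * B) :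
    Real.exp A - 1 ≤ c * Real.exp B := by
  by_cases hc1 : c ≤ 1
  · have hconv := convexOn_exp.2 (Set.mem_univ (0:ℝ)) (Set.mem_univ B)
      (by linarith : (0:ℝ) ≤ 1 - c) hc0 (by ring)
    simp only [smul_eq_mul, mul_zero, zero_add, Real.exp_zero, mul_one] at hconv
    have h1 : Real.exp A ≤ Real.exp (c * B) := Real.exp_le_exp.mpr hAcB
    have h2 : 0 ≤ c * Real.exp B := mul_nonneg hc0 (Real.exp_pos B).le
    linarith
  · push_neg at hc1
    have h1 : Real.exp A ≤ Real.exp B := Real.exp_le_exp.mpr hAB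
    nlinarith [Real.exp_pos B]

lemma aux_mul (s e : ℝ) (hs1 : s ≤ 1) (he : 1 ≤ e) : s * (e - 1) ≤ e - 1 := by
  nlinarith

lemma aux_exp (q e : ℝ) (hq : 0 ≤ q) (he : 1 ≤ e) : q ≤ q * e := by nlinarith

lemma aux_frac (r t : ℝ) (hr0 : 0 ≤ r) (ht : 0 < t) :
    3 * r / (t + r) ≤ 3 / 2 * (Real.sqrt r / Real.sqrt t) := by
  have htr : 0 < t + r := by linarith
  have hur : Real.sqrt r ^ 2 = r := Real.sq_sqrt hr0
  have hur0 : 0 ≤ Real.sqrt r := Real.sqrt_nonneg r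
  have hut : Real.sqrt t ^ 2 = t := Real.sq_sqrt ht.le
  have hut0 : 0 < Real.sqrt t := Real.sqrt_pos.mpr ht
  rw [show (3:ℝ)/2 * (Real.sqrt r/Real.sqrt t) = 3*Real.sqrt r/(2*Real.sqrt t) by ring,
    div_le_div_iff₀ htr (by positivity)]
  nlinarith [mul_nonneg hur0 (sq_nonneg (Real.sqrt t - Real.sqrt r))]

theorem stmt_14 (ν t n x : ℝ) (hν : 0 < ν) (ht : 0 < t) (hn : 1 < n)
    (r : ℝ) (hr0 : 0 ≤ r) (hrn : r ≤ n ^ 2 * t) :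
    |heatKernel (ν / 2) (t + r) x / heatKernel (ν / 2) t x - 1| ≤
      (3 * r / (t + r)) * Real.exp (n ^ 2 * x ^ 2 / (ν * t * (1 + n ^ 2))) ∧
    (3 * r / (t + r)) * Real.exp (n ^ 2 * x ^ 2 / (ν * t * (1 + n ^ 2))) ≤
      (3 / 2) * (Real.sqrt (r * (1 + n ^ 2)) / Real.sqrt t) *
        (heatKernel (ν / 2) t x)⁻¹ * heatKernel (ν * (1 + n ^ 2) / 2) t x := by
  have hπ := Real.pi_pos
  have htr : 0 < t + r := by linarith
  have hn2 : (1:ℝ) < n ^ 2 := by nlinarith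
  have hn2' : (0:ℝ) < 1 + n ^ 2 := by linarith
  have hνt : 0 < ν * t := mul_pos hν ht
  set B := n ^ 2 * x ^ 2 / (ν * t * (1 + n ^ 2)) with hBdef
  have hB0 : 0 ≤ B := div_nonneg (by positivity) (mul_pos hνt hn2').le
  have hpν : (0:ℝ) < Real.sqrt (Real.pi*ν) := Real.sqrt_pos.mpr (mul_pos hπ hν)
  have hst : (0:ℝ) < Real.sqrt t := Real.sqrt_pos.mpr ht
  have hstr : (0:ℝ) < Real.sqrt (t+r) := Real.sqrt_pos.mpr htr
  have hratio : heatKernel (ν/2) (t+r) x / heatKernel (ν/2) t x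
      = Real.sqrt t / Real.sqrt (t+r) * Real.exp (x^2*r/(ν*t*(t+r))) := by
    rw [hk_eq, hk_eq, mul_div_mul_comm]
    congr 1
    · rw [Real.sqrt_mul (mul_pos hπ hν).le (t+r), Real.sqrt_mul (mul_pos hπ hν).le t]
      field_simp
    · rw [← Real.exp_sub]
      congr 1
      field_simp
      ring
  set A := x^2*r/(ν*t*(t+r)) with hAdef
  have hA0 : 0 ≤ A := div_nonneg (by positivity) (mul_pos hνt htr).le
  have hAB : A ≤ B := by
    rw [hAdef, hBdef, div_le_div_iff₀ (mul_pos hνt htr) (mul_pos hνt hn2')]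
    nlinarith [mul_nonneg (mul_nonneg (sq_nonneg x) hνt.le) (sub_nonneg.mpr hrn)]
  set s := Real.sqrt t / Real.sqrt (t+r) with hsdef
  have hs0 : 0 < s := div_pos hst hstr
  have hs1 : s ≤ 1 := by
    rw [hsdef, div_le_one hstr]
    exact Real.sqrt_le_sqrt (by linarith)
  have hu : Real.sqrt t ^ 2 = t := Real.sq_sqrt ht.le
  have hv : Real.sqrt (t+r) ^ 2 = t + r := Real.sq_sqrt htr.le
  have step2 : 1 - s ≤ r / (t + r) := by
    have h := aux1 (Real.sqrt t) (Real.sqrt (t+r)) hst (Real.sqrt_le_sqrt (by linarith))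
    rw [hu, hv, show t + r - t = r by ring] at h
    exact h
  have step1 : Real.exp A - 1 ≤ 2*r/(t+r) * Real.exp B := by
    apply aux_conv A B _ hA0 hB0 hAB (div_nonneg (by linarith) htr.le)
    rw [hAdef, hBdef, div_mul_div_comm,
      div_le_div_iff₀ (mul_pos hνt htr) (mul_pos htr (mul_pos hνt hn2'))]
    nlinarith [mul_nonneg (mul_nonneg (mul_nonneg (mul_nonneg (sq_nonneg x) hr0) hνt.le)
      htr.le) (by nlinarith : (0:ℝ) ≤ n^2 - 1)]
  constructor
  · rw [hratio]
    have habs := aux_abs s (Real.exp A) hs0 hs1 (Real.one_le_exp hA0)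
    have h1 := aux_mul s (Real.exp A) hs1 (Real.one_le_exp hA0)
    have h4 := aux_exp (r/(t+r)) (Real.exp B) (div_nonneg hr0 htr.le) (Real.one_le_exp hB0)
    have hsum : 2*r/(t+r) * Real.exp B + r/(t+r) * Real.exp B = 3*r/(t+r) * Real.exp B := by
      ring
    linarith
  · have hk2 : heatKernel (ν * (1 + n ^ 2) / 2) t x
        = 1/(Real.sqrt (Real.pi*ν*t) * Real.sqrt (1+n^2))
          * Real.exp (-(x^2)/(ν*t*(1+n^2))) := by
      rw [hk_eq]
      rw [show Real.pi*(ν*(1+n^2))*t = (Real.pi*ν*t)*(1+n^2) by ring,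
        show ν*(1+n^2)*t = ν*t*(1+n^2) by ring,
        Real.sqrt_mul (by positivity) (1+n^2)]
    have hPt : (0:ℝ) < Real.sqrt (Real.pi*ν*t) := Real.sqrt_pos.mpr (by positivity)
    have hsn : (0:ℝ) < Real.sqrt (1+n^2) := Real.sqrt_pos.mpr hn2'
    have hBsub : B = x^2/(ν*t) - x^2/(ν*t*(1+n^2)) := by
      rw [hBdef]; field_simp; ring
    have hRHS : (3/2) * (Real.sqrt (r*(1+n^2))/Real.sqrt t) *
        (heatKernel (ν/2) t x)⁻¹ * heatKernel (ν*(1+n^2)/2) t x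
        = (3/2) * (Real.sqrt r/Real.sqrt t) * Real.exp B := by
      rw [hk_eq, hk2, Real.sqrt_mul hr0, hBsub, Real.exp_sub, neg_div, neg_div,
        Real.exp_neg, Real.exp_neg]
      field_simp
    rw [hRHS]
    exact mul_le_mul_of_nonneg_right (aux_frac r t hr0 ht) (Real.exp_pos B).le
end

section
/- For all 0 ≤ s ≤ t and x, y ∈ ℝ: (i) ∫₀ᵗ∫_ℝ (G_ν(t−r,x−z) − G_ν(t−r,y−z))² dz dr ≤ |x−y|/ν; (ii) ∫₀ˢ∫_ℝ (G_ν(t−r,x−z) − G_ν(s−r,x−z))² dz dr ≤ ((√2−1)/√π)·√(t−s)/√ν; (iii) ∫ₛᵗ∫_ℝ G_ν(t−r,x−z)² dz dr = (1/√π)·√(t−s)/√ν. -/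
open Real MeasureTheory ProbabilityTheory Set Filter Topology

section HeatKernel

variable {ν t t₁ t₂ : ℝ}

lemma heatKernel_of_nonpos (hν : 0 ≤ ν) (ht : t ≤ 0) (x : ℝ) : heatKernel ν t x = 0 := by
  rw [heatKernel, sqrt_eq_zero'.mpr (mul_nonpos_of_nonneg_of_nonpos (by positivity) ht),
    div_zero, zero_mul]

lemma heatKernel_zero (hν : 0 ≤ ν) (t : ℝ) :
    heatKernel ν t 0 = (√2 * √π * √ν)⁻¹ * (√t)⁻¹ := by
  rw [heatKernel, sqrt_mul (by positivity : (0 : ℝ) ≤ 2 * π * ν), sqrt_mul (by positivity),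
    sqrt_mul zero_le_two, one_div, mul_inv]
  simp

lemma heatKernel_eq_heatKernel_zero_mul (x : ℝ) :
    heatKernel ν t x = heatKernel ν t 0 * exp (-x ^ 2 / (2 * ν * t)) := by
  simp [heatKernel]

lemma heatKernel_sub_eq_gaussianPDFReal (hνt : 0 ≤ ν * t) (m x : ℝ) :
    heatKernel ν t (x - m) = gaussianPDFReal m (ν * t).toNNReal x := by
  rw [gaussianPDFReal, Real.coe_toNNReal _ hνt, heatKernel, one_div]
  ring_nf

lemma integrable_heatKernel_sub (hνt : 0 ≤ ν * t) (m : ℝ) :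
    Integrable (fun x ↦ heatKernel ν t (x - m)) := by
  simpa only [heatKernel_sub_eq_gaussianPDFReal hνt] using integrable_gaussianPDFReal m _

lemma integral_heatKernel_sub (hνt : 0 < ν * t) (m : ℝ) :
    ∫ x, heatKernel ν t (x - m) = 1 := by
  simp_rw [heatKernel_sub_eq_gaussianPDFReal hνt.le]
  exact integral_gaussianPDFReal_eq_one m (by simpa using hνt)

lemma heatKernel_mul_heatKernel_s16 (hν : 0 < ν) (h₁ : 0 < t₁) (h₂ : 0 < t₂) (a b z : ℝ) :
    heatKernel ν t₁ (a - z) * heatKernel ν t₂ (b - z) =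
      heatKernel ν (t₁ + t₂) (a - b) *
        heatKernel ν (t₁ * t₂ / (t₁ + t₂)) (z - (a * t₂ + b * t₁) / (t₁ + t₂)) := by
  have hexp : -(a - z) ^ 2 / (2 * ν * t₁) + -(b - z) ^ 2 / (2 * ν * t₂) =
      -(a - b) ^ 2 / (2 * ν * (t₁ + t₂)) +
        -(z - (a * t₂ + b * t₁) / (t₁ + t₂)) ^ 2 / (2 * ν * (t₁ * t₂ / (t₁ + t₂))) := by
    field_simp
    ring
  have hsqrt : √(2 * π * ν * t₁) * √(2 * π * ν * t₂) =
      √(2 * π * ν * (t₁ + t₂)) * √(2 * π * ν * (t₁ * t₂ / (t₁ + t₂))) := by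
    rw [← sqrt_mul (by positivity), ← sqrt_mul (by positivity)]
    congr 1
    field_simp
  simp only [heatKernel]
  rw [mul_mul_mul_comm, ← exp_add, hexp, exp_add, one_div_mul_one_div, hsqrt,
    ← one_div_mul_one_div, mul_mul_mul_comm]

theorem integral_heatKernel_mul_heatKernel (hν : 0 < ν) (h₁ : 0 < t₁) (h₂ : 0 < t₂) (a b : ℝ) :
    ∫ z, heatKernel ν t₁ (a - z) * heatKernel ν t₂ (b - z) = heatKernel ν (t₁ + t₂) (a - b) := by
  have hσ : 0 < ν * (t₁ * t₂ / (t₁ + t₂)) := by positivity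
  simp_rw [heatKernel_mul_heatKernel_s16 hν h₁ h₂, integral_const_mul, integral_heatKernel_sub hσ,
    mul_one]

lemma integrable_heatKernel_mul_heatKernel (hν : 0 < ν) (h₁ : 0 < t₁) (h₂ : 0 < t₂) (a b : ℝ) :
    Integrable (fun z ↦ heatKernel ν t₁ (a - z) * heatKernel ν t₂ (b - z)) := by
  simp_rw [heatKernel_mul_heatKernel_s16 hν h₁ h₂]
  exact (integrable_heatKernel_sub (by positivity) _).const_mul _

lemma integral_heatKernel_sub_heatKernel_sq (hν : 0 < ν) (h₁ : 0 < t₁) (h₂ : 0 < t₂) (a b : ℝ) :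
    ∫ z, (heatKernel ν t₁ (a - z) - heatKernel ν t₂ (b - z)) ^ 2 =
      heatKernel ν (t₁ + t₁) 0 + heatKernel ν (t₂ + t₂) 0 -
        2 * heatKernel ν (t₁ + t₂) (a - b) := by
  have I₁₁ := integrable_heatKernel_mul_heatKernel hν h₁ h₁ a a
  have I₂₂ := integrable_heatKernel_mul_heatKernel hν h₂ h₂ b b
  have I₁₂ := integrable_heatKernel_mul_heatKernel hν h₁ h₂ a b
  have expand : ∀ z, (heatKernel ν t₁ (a - z) - heatKernel ν t₂ (b - z)) ^ 2 =
      heatKernel ν t₁ (a - z) * heatKernel ν t₁ (a - z) +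
        heatKernel ν t₂ (b - z) * heatKernel ν t₂ (b - z) -
        2 * (heatKernel ν t₁ (a - z) * heatKernel ν t₂ (b - z)) := fun z ↦ by ring
  simp_rw [expand]
  rw [integral_sub (by exact I₁₁.add I₂₂) (I₁₂.const_mul 2), integral_add I₁₁ I₂₂,
    integral_const_mul,
    integral_heatKernel_mul_heatKernel hν h₁ h₁, integral_heatKernel_mul_heatKernel hν h₂ h₂,
    integral_heatKernel_mul_heatKernel hν h₁ h₂, sub_self, sub_self]

lemma integral_heatKernel_sq (hν : 0 < ν) (t x : ℝ) :
    ∫ z, heatKernel ν t (x - z) ^ 2 = heatKernel ν (t + t) 0 := by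
  rcases le_or_gt t 0 with ht | ht
  · simp [heatKernel_of_nonpos hν.le ht, heatKernel_of_nonpos hν.le (by linarith : t + t ≤ 0)]
  · simp_rw [sq, integral_heatKernel_mul_heatKernel hν ht ht, sub_self]

end HeatKernel

section InvSqrt

variable {a b c m : ℝ}

lemma hasDerivAt_neg_two_div_mul_sqrt_sub_mul (hm : m ≠ 0) {r : ℝ} (h : 0 < c - m * r) :
    HasDerivAt (fun r ↦ -(2 / m) * √(c - m * r)) (√(c - m * r))⁻¹ r := by
  have := (((hasDerivAt_id r).const_mul m).const_sub c).sqrt h.ne' |>.const_mul (-(2 / m))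
  refine this.congr_deriv ?_
  simp only [id, mul_one]
  field_simp

lemma intervalIntegrable_inv_sqrt_sub_mul (hab : a ≤ b) (hm : 0 < m) (hb : 0 ≤ c - m * b) :
    IntervalIntegrable (fun r ↦ (√(c - m * r))⁻¹) volume a b := by
  refine intervalIntegral.intervalIntegrable_deriv_of_nonneg
    (g := fun r ↦ -(2 / m) * √(c - m * r)) (by fun_prop)
    (fun r hr ↦ hasDerivAt_neg_two_div_mul_sqrt_sub_mul hm.ne' ?_) (fun r _ ↦ by positivity)
  rw [min_eq_left hab, max_eq_right hab] at hr
  nlinarith [hr.2]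

theorem integral_inv_sqrt_sub_mul (hab : a ≤ b) (hm : 0 < m) (hb : 0 ≤ c - m * b) :
    ∫ r in a..b, (√(c - m * r))⁻¹ = 2 * (√(c - m * a) - √(c - m * b)) / m := by
  rw [intervalIntegral.integral_eq_sub_of_hasDerivAt_of_le hab (by fun_prop)
    (fun r hr ↦ hasDerivAt_neg_two_div_mul_sqrt_sub_mul hm.ne' (by nlinarith [hr.2]))
    (intervalIntegrable_inv_sqrt_sub_mul hab hm hb)]
  ring

end InvSqrt

lemma sqrt_add_sqrt_le_sqrt_two_mul_sqrt_add {s t : ℝ} (hs : 0 ≤ s) (ht : 0 ≤ t) :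
    √s + √t ≤ √2 * √(s + t) := by
  rw [← sqrt_mul zero_le_two, le_sqrt (by positivity) (by positivity)]
  nlinarith [sq_nonneg (√s - √t), sq_sqrt hs, sq_sqrt ht]

lemma one_sub_exp_neg_nonneg {x : ℝ} (hx : 0 ≤ x) : 0 ≤ 1 - exp (-x) :=
  sub_nonneg.mpr (exp_le_one_iff.mpr (neg_nonpos.mpr hx))

lemma one_sub_exp_neg_le (x : ℝ) : 1 - exp (-x) ≤ x := by
  linarith [one_sub_le_exp_neg x]

section Improper

variable {C : ℝ}

lemma integrableOn_Ioi_rpow_neg_three_halves_mul_one_sub_exp_neg_mul (hC : 0 ≤ C) :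
    IntegrableOn (fun v ↦ v ^ (-(3 / 2) : ℝ) * (1 - exp (-(C * v)))) (Ioi 0) := by
  have hmeas : AEStronglyMeasurable (fun v : ℝ ↦ v ^ (-(3 / 2) : ℝ) * (1 - exp (-(C * v)))) :=
    by fun_prop
  have hnorm : ∀ v : ℝ, 0 < v →
      ‖v ^ (-(3 / 2) : ℝ) * (1 - exp (-(C * v)))‖ = v ^ (-(3 / 2) : ℝ) * (1 - exp (-(C * v))) :=
    fun v hv ↦ norm_of_nonneg (mul_nonneg (rpow_nonneg hv.le _)
      (one_sub_exp_neg_nonneg (by positivity)))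
  rw [← Ioc_union_Ioi_eq_Ioi zero_le_one]
  refine IntegrableOn.union ?_ ?_
  · have hbound : IntegrableOn (fun v : ℝ ↦ C * v ^ (-(1 / 2) : ℝ)) (Ioc 0 1) :=
      ((intervalIntegral.intervalIntegrable_rpow' (by norm_num)).1).const_mul C
    refine hbound.mono' hmeas.restrict ((ae_restrict_iff' measurableSet_Ioc).mpr
      (Eventually.of_forall fun v hv ↦ ?_))
    rw [hnorm v hv.1]
    calc v ^ (-(3 / 2) : ℝ) * (1 - exp (-(C * v))) ≤ v ^ (-(3 / 2) : ℝ) * (C * v) :=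
          mul_le_mul_of_nonneg_left (one_sub_exp_neg_le _) (rpow_nonneg hv.1.le _)
      _ = C * v ^ (-(1 / 2) : ℝ) := by
          rw [show (-(1 / 2) : ℝ) = -(3 / 2) + 1 by norm_num, rpow_add_one hv.1.ne']
          ring
  · refine (integrableOn_Ioi_rpow_of_lt (by norm_num : (-(3 / 2) : ℝ) < -1) one_pos).mono'
      hmeas.restrict ((ae_restrict_iff' measurableSet_Ioi).mpr
      (Eventually.of_forall fun v hv ↦ ?_))
    rw [hnorm v (one_pos.trans hv)]
    exact mul_le_of_le_one_right (rpow_nonneg (one_pos.trans hv).le _)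
      (by linarith [exp_pos (-(C * v))])

lemma integrableOn_Ioi_rpow_neg_half_mul_exp_neg_mul (hC : 0 < C) :
    IntegrableOn (fun v ↦ v ^ (-(1 / 2) : ℝ) * exp (-(C * v))) (Ioi 0) := by
  simpa only [rpow_one, neg_mul] using
    integrableOn_rpow_mul_exp_neg_mul_rpow (p := 1) (by norm_num) one_pos hC

lemma integral_Ioi_rpow_neg_half_mul_exp_neg_mul (hC : 0 < C) :
    ∫ v in Ioi 0, v ^ (-(1 / 2) : ℝ) * exp (-(C * v)) = √π / √C := by
  have := integral_rpow_mul_exp_neg_mul_Ioi (by norm_num : (0 : ℝ) < 1 / 2) hC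
  rw [show (1 / 2 : ℝ) - 1 = -(1 / 2) by norm_num, Gamma_one_half_eq] at this
  rw [this, ← sqrt_eq_rpow, one_div C, sqrt_inv, div_eq_inv_mul]

lemma hasDerivAt_rpow_neg_half_mul_one_sub_exp_neg_mul {v : ℝ} (hv : 0 < v) :
    HasDerivAt (fun v ↦ -2 * v ^ (-(1 / 2) : ℝ) * (1 - exp (-(C * v))))
      (v ^ (-(3 / 2) : ℝ) * (1 - exp (-(C * v))) -
        2 * C * (v ^ (-(1 / 2) : ℝ) * exp (-(C * v)))) v := by
  have := (((hasDerivAt_rpow_const (p := -(1 / 2)) (Or.inl hv.ne')).mul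
    (((hasDerivAt_id v).const_mul C).neg.exp.const_sub 1)).const_mul (-2))
  refine (this.congr_deriv ?_).congr_of_eventuallyEq (Eventually.of_forall fun w ↦ ?_)
  · simp only [id, mul_one, Pi.neg_apply]
    rw [show -(1 / 2 : ℝ) - 1 = -(3 / 2) by norm_num]
    ring
  · simp only [id, Pi.mul_apply, Pi.neg_apply]
    ring

lemma integral_Ioi_rpow_neg_three_halves_mul_one_sub_exp_neg_mul (hC : 0 < C) :
    ∫ v in Ioi 0, v ^ (-(3 / 2) : ℝ) * (1 - exp (-(C * v))) = 2 * √(π * C) := by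
  set g : ℝ → ℝ := fun v ↦ -2 * v ^ (-(1 / 2) : ℝ) * (1 - exp (-(C * v)))
  have hg0 : g 0 = 0 := by simp [g]
  have hnorm : ∀ v : ℝ, 0 ≤ v → ‖g v‖ = 2 * v ^ (-(1 / 2) : ℝ) * (1 - exp (-(C * v))) := by
    intro v hv
    have := one_sub_exp_neg_nonneg (mul_nonneg hC.le hv)
    simp only [g, norm_mul, norm_neg, Real.norm_two, norm_of_nonneg (rpow_nonneg hv _),
      norm_of_nonneg this]
  have hcont : ContinuousWithinAt g (Ici 0) 0 := by
    have hlim : Tendsto (fun v : ℝ ↦ 2 * C * v ^ (1 / 2 : ℝ)) (𝓝[Ici 0] 0) (𝓝 0) := by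
      simpa using (((continuous_rpow_const (by norm_num : (0 : ℝ) ≤ 1 / 2)).tendsto 0).const_mul
        (2 * C)).mono_left nhdsWithin_le_nhds
    rw [ContinuousWithinAt, hg0]
    refine squeeze_zero_norm' (eventually_nhdsWithin_of_forall fun v (hv : 0 ≤ v) ↦ ?_) hlim
    calc ‖g v‖ = 2 * v ^ (-(1 / 2) : ℝ) * (1 - exp (-(C * v))) := hnorm v hv
      _ ≤ 2 * v ^ (-(1 / 2) : ℝ) * (C * v) := by gcongr; exact one_sub_exp_neg_le _
      _ = 2 * C * (v ^ (-(1 / 2) : ℝ) * v) := by ring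
      _ = 2 * C * v ^ (1 / 2 : ℝ) := by rw [← rpow_add_one' hv (by norm_num)]; norm_num
  have htop : Tendsto g atTop (𝓝 0) := by
    have hlim : Tendsto (fun v : ℝ ↦ 2 * v ^ (-(1 / 2) : ℝ)) atTop (𝓝 0) := by
      simpa using (tendsto_rpow_neg_atTop (by norm_num : (0 : ℝ) < 1 / 2)).const_mul 2
    refine squeeze_zero_norm' ((eventually_ge_atTop 0).mono fun v hv ↦ ?_) hlim
    rw [hnorm v hv]
    exact mul_le_of_le_one_right (by positivity) (by linarith [exp_pos (-(C * v))])
  have hψ := integrableOn_Ioi_rpow_neg_three_halves_mul_one_sub_exp_neg_mul hC.le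
  have hγ := (integrableOn_Ioi_rpow_neg_half_mul_exp_neg_mul hC).const_mul (2 * C)
  have hibp := integral_Ioi_of_hasDerivAt_of_tendsto hcont
    (fun _ hv ↦ hasDerivAt_rpow_neg_half_mul_one_sub_exp_neg_mul hv) (hψ.sub hγ) htop
  rw [integral_sub hψ hγ, integral_const_mul, integral_Ioi_rpow_neg_half_mul_exp_neg_mul hC, hg0,
    sub_zero, sub_eq_zero] at hibp
  rw [hibp, sqrt_mul pi_pos.le]
  field_simp
  rw [sq_sqrt hC.le]

lemma rpow_neg_half_mul_one_sub_exp_neg_div_comp_inv {x : ℝ} (hx : 0 < x) :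
    (|(-1 : ℝ)| * x ^ ((-1 : ℝ) - 1)) • ((x ^ (-1 : ℝ)) ^ (-(1 / 2) : ℝ) *
      (1 - exp (-(C / x ^ (-1 : ℝ))))) = x ^ (-(3 / 2) : ℝ) * (1 - exp (-(C * x))) := by
  rw [rpow_neg_one, div_inv_eq_mul, inv_rpow hx.le, ← rpow_neg hx.le, smul_eq_mul, abs_neg,
    abs_one, one_mul, ← mul_assoc, ← rpow_add hx]
  norm_num

lemma integrableOn_Ioi_rpow_neg_half_mul_one_sub_exp_neg_div (hC : 0 ≤ C) :
    IntegrableOn (fun u ↦ u ^ (-(1 / 2) : ℝ) * (1 - exp (-(C / u)))) (Ioi 0) :=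
  (integrableOn_Ioi_comp_rpow_iff _ (by norm_num : (-1 : ℝ) ≠ 0)).mp
    ((integrableOn_Ioi_rpow_neg_three_halves_mul_one_sub_exp_neg_mul hC).congr_fun
      (fun _ hx ↦ (rpow_neg_half_mul_one_sub_exp_neg_div_comp_inv hx).symm) measurableSet_Ioi)

lemma integral_Ioi_rpow_neg_half_mul_one_sub_exp_neg_div (hC : 0 < C) :
    ∫ u in Ioi 0, u ^ (-(1 / 2) : ℝ) * (1 - exp (-(C / u))) = 2 * √(π * C) := by
  rw [← integral_comp_rpow_Ioi _ (by norm_num : (-1 : ℝ) ≠ 0),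
    setIntegral_congr_fun measurableSet_Ioi
      (fun _ hx ↦ rpow_neg_half_mul_one_sub_exp_neg_div_comp_inv hx),
    integral_Ioi_rpow_neg_three_halves_mul_one_sub_exp_neg_mul hC]

lemma setIntegral_Ioc_rpow_neg_half_mul_one_sub_exp_neg_div_le (hC : 0 ≤ C) (t : ℝ) :
    ∫ u in Ioc 0 t, u ^ (-(1 / 2) : ℝ) * (1 - exp (-(C / u))) ≤ 2 * √(π * C) := by
  rcases hC.eq_or_lt with rfl | hC
  · simp
  rw [← integral_Ioi_rpow_neg_half_mul_one_sub_exp_neg_div hC]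
  refine setIntegral_mono_set (integrableOn_Ioi_rpow_neg_half_mul_one_sub_exp_neg_div hC.le)
    ((ae_restrict_iff' measurableSet_Ioi).mpr (Eventually.of_forall fun u hu ↦ ?_))
    Ioc_subset_Ioi_self.eventuallyLE
  exact mul_nonneg (rpow_nonneg (le_of_lt hu) _)
    (one_sub_exp_neg_nonneg (div_nonneg hC.le (le_of_lt hu)))

end Improper

section Estimates

variable {ν s t : ℝ}

theorem integral_integral_heatKernel_sq (hν : 0 < ν) (hst : s ≤ t) (x : ℝ) :
    ∫ r in s..t, ∫ z, heatKernel ν (t - r) (x - z) ^ 2 = 1 / √π * (√(t - s) / √ν) := by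
  have inner : ∀ r, ∫ z, heatKernel ν (t - r) (x - z) ^ 2 =
      (√2 * √π * √ν)⁻¹ * (√(2 * t - 2 * r))⁻¹ := fun r ↦ by
    rw [integral_heatKernel_sq hν, heatKernel_zero hν.le,
      show t - r + (t - r) = 2 * t - 2 * r by ring]
  simp_rw [inner]
  rw [intervalIntegral.integral_const_mul, integral_inv_sqrt_sub_mul hst two_pos (by linarith),
    sub_self, sqrt_zero, sub_zero, show 2 * t - 2 * s = 2 * (t - s) by ring, sqrt_mul zero_le_two]
  field_simp

lemma integral_heatKernel_sub_heatKernel_sq_same_time (hν : 0 < ν) {τ : ℝ} (hτ : 0 ≤ τ) (x y : ℝ) :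
    ∫ z, (heatKernel ν τ (x - z) - heatKernel ν τ (y - z)) ^ 2 =
      (√π * √ν)⁻¹ * (τ ^ (-(1 / 2) : ℝ) * (1 - exp (-((x - y) ^ 2 / (4 * ν) / τ)))) := by
  rcases hτ.eq_or_lt with rfl | hτ
  · simp [heatKernel_of_nonpos hν.le le_rfl]
  rw [integral_heatKernel_sub_heatKernel_sq hν hτ hτ,
    heatKernel_eq_heatKernel_zero_mul (t := τ + τ) (x - y), heatKernel_zero hν.le, rpow_neg hτ.le,
    ← sqrt_eq_rpow, show τ + τ = 2 * τ by ring, sqrt_mul zero_le_two,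
    show -(x - y) ^ 2 / (2 * ν * (2 * τ)) = -((x - y) ^ 2 / (4 * ν) / τ) by field_simp; ring]
  field_simp
  rw [sq_sqrt zero_le_two]
  ring

theorem integral_integral_heatKernel_sub_heatKernel_sq_space_le (hν : 0 < ν) (ht : 0 ≤ t)
    (x y : ℝ) :
    ∫ r in 0..t, ∫ z, (heatKernel ν (t - r) (x - z) - heatKernel ν (t - r) (y - z)) ^ 2 ≤
      |x - y| / ν := by
  set C := (x - y) ^ 2 / (4 * ν)
  have hC : √(π * C) = √π * |x - y| / (2 * √ν) := by
    rw [sqrt_mul pi_pos.le, sqrt_div' _ (by positivity), sqrt_sq_eq_abs,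
      show (4 : ℝ) * ν = 2 ^ 2 * ν by ring, sqrt_mul (by positivity), sqrt_sq zero_le_two]
    ring
  rw [intervalIntegral.integral_congr (g := fun r ↦ (√π * √ν)⁻¹ *
      ((t - r) ^ (-(1 / 2) : ℝ) * (1 - exp (-(C / (t - r))))))
      (fun r hr ↦ integral_heatKernel_sub_heatKernel_sq_same_time hν
        (by rw [uIcc_of_le ht] at hr; linarith [hr.2]) x y),
    intervalIntegral.integral_const_mul,
    intervalIntegral.integral_comp_sub_left (fun u ↦ u ^ (-(1 / 2) : ℝ) * (1 - exp (-(C / u)))) t,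
    sub_self, sub_zero, intervalIntegral.integral_of_le ht]
  calc _ ≤ (√π * √ν)⁻¹ * (2 * √(π * C)) := mul_le_mul_of_nonneg_left
        (setIntegral_Ioc_rpow_neg_half_mul_one_sub_exp_neg_div_le (by positivity) t) (by positivity)
    _ = |x - y| / ν := by
      rw [hC]
      field_simp
      rw [sq_sqrt hν.le]
      ring

lemma integral_heatKernel_sub_heatKernel_sq_same_point (hν : 0 < ν) {r : ℝ} (hr : r < s)
    (hst : s ≤ t) (x : ℝ) :
    ∫ z, (heatKernel ν (t - r) (x - z) - heatKernel ν (s - r) (x - z)) ^ 2 =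
      (√2 * √π * √ν)⁻¹ * ((√(2 * t - 2 * r))⁻¹ + (√(2 * s - 2 * r))⁻¹ -
        2 * (√(t + s - 2 * r))⁻¹) := by
  rw [integral_heatKernel_sub_heatKernel_sq hν (by linarith) (by linarith), sub_self,
    heatKernel_zero hν.le, heatKernel_zero hν.le, heatKernel_zero hν.le,
    show t - r + (t - r) = 2 * t - 2 * r by ring, show s - r + (s - r) = 2 * s - 2 * r by ring,
    show t - r + (s - r) = t + s - 2 * r by ring]
  ring

theorem integral_integral_heatKernel_sub_heatKernel_sq_time_le (hν : 0 < ν) (hs : 0 ≤ s)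
    (hst : s ≤ t) (x : ℝ) :
    ∫ r in 0..s, ∫ z, (heatKernel ν (t - r) (x - z) - heatKernel ν (s - r) (x - z)) ^ 2 ≤
      (√2 - 1) / √π * (√(t - s) / √ν) := by
  have J : ∀ c, 0 ≤ c - 2 * s → IntervalIntegrable (fun r ↦ (√(c - 2 * r))⁻¹) volume 0 s :=
    fun c hc ↦ intervalIntegrable_inv_sqrt_sub_mul hs two_pos hc
  -- the closed form of the inner integral fails at `r = s`, where `s - r = 0`
  rw [intervalIntegral.integral_congr_ae ((Measure.ae_ne volume s).mono fun r hrs hr ↦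
      integral_heatKernel_sub_heatKernel_sq_same_point hν
        (lt_of_le_of_ne (by rw [uIoc_of_le hs] at hr; exact hr.2) hrs) hst x),
    intervalIntegral.integral_const_mul,
    intervalIntegral.integral_sub ((J _ (by linarith)).add (J _ (by linarith)))
      ((J _ (by linarith)).const_mul 2),
    intervalIntegral.integral_add (J _ (by linarith)) (J _ (by linarith)),
    intervalIntegral.integral_const_mul, integral_inv_sqrt_sub_mul hs two_pos (by linarith),
    integral_inv_sqrt_sub_mul hs two_pos (by linarith),
    integral_inv_sqrt_sub_mul hs two_pos (by linarith)]
  simp only [mul_zero, sub_zero, sub_self, sqrt_zero, show t + s - 2 * s = t - s by ring,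
    show 2 * t - 2 * s = 2 * (t - s) by ring, sqrt_mul zero_le_two]
  rw [div_mul_div_comm, le_div_iff₀ (by positivity)]
  field_simp
  have key := sqrt_add_sqrt_le_sqrt_two_mul_sqrt_add (hs.trans hst) hs
  have h2 : ∀ a : ℝ, √2 * √2 * a = 2 * a := fun a ↦ by rw [mul_self_sqrt zero_le_two]
  linarith [mul_le_mul_of_nonneg_left key (sqrt_nonneg 2), h2 √(t + s), h2 √(t - s)]

end Estimates

theorem stmt_16 (ν : ℝ) (hν : 0 < ν) (s t x y : ℝ) (hs : 0 ≤ s) (hst : s ≤ t) :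
    (∫ r in (0:ℝ)..t, ∫ z : ℝ,
        (heatKernel ν (t - r) (x - z) - heatKernel ν (t - r) (y - z)) ^ 2) ≤
      |x - y| / ν ∧
    (∫ r in (0:ℝ)..s, ∫ z : ℝ,
        (heatKernel ν (t - r) (x - z) - heatKernel ν (s - r) (x - z)) ^ 2) ≤
      ((Real.sqrt 2 - 1) / Real.sqrt Real.pi) * (Real.sqrt (t - s) / Real.sqrt ν) ∧
    (∫ r in s..t, ∫ z : ℝ, heatKernel ν (t - r) (x - z) ^ 2) =
      (1 / Real.sqrt Real.pi) * (Real.sqrt (t - s) / Real.sqrt ν) :=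
  ⟨integral_integral_heatKernel_sub_heatKernel_sq_space_le hν (hs.trans hst) x y,
    integral_integral_heatKernel_sub_heatKernel_sq_time_le hν hs hst x,
    integral_integral_heatKernel_sq hν hst x⟩
end

section
/- Let g(x) = e^{c|x|^a} with c > 0, a > 1, and fix n > 0. For all x ∈ ℝ, z ∈ ℝ, and 0 ≤ t ≤ t' ≤ n, |g(x − √t·z) − g(x − √{t'}·z)| ≤ a·c·exp(c₁|x|^a + c₂|z|^a)·√(t'−t), where c₁ = (c + (a−1)/(a·e))·2^{a−1} and c₂ = c₁·n^{a/2} + 1/(a·e). -/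
open Real Set

lemma my_log_le (r : ℝ) (hr : 0 < r) : Real.log r ≤ r / Real.exp 1 := by
  have he : (0:ℝ) < Real.exp 1 := Real.exp_pos 1
  have h := Real.log_le_sub_one_of_pos (show 0 < r / Real.exp 1 by positivity)
  rw [Real.log_div hr.ne' he.ne', Real.log_exp] at h
  linarith

lemma my_rpow_le_exp {s b a : ℝ} (hs : 0 ≤ s) (ha : 0 < a) (hb : 0 ≤ b) :
    s ^ b ≤ Real.exp (b / (a * Real.exp 1) * s ^ a) := by
  rcases hs.eq_or_lt with h | h
  · rcases hb.eq_or_lt with h2 | h2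
    · simp [← h, ← h2]
    · rw [← h, Real.zero_rpow h2.ne']
      positivity
  · rw [Real.rpow_def_of_pos h]
    apply Real.exp_le_exp.2
    have hlog : a * Real.log s ≤ s ^ a / Real.exp 1 := by
      have := my_log_le (s ^ a) (Real.rpow_pos_of_pos h a)
      rwa [Real.log_rpow h] at this
    have he : (0:ℝ) < Real.exp 1 := Real.exp_pos 1
    have h3 : a * (s ^ a / (a * Real.exp 1)) = s ^ a / Real.exp 1 := by
      field_simp
    have hls : Real.log s ≤ s ^ a / (a * Real.exp 1) :=
      le_of_mul_le_mul_left (by rw [h3]; exact hlog) ha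
    calc Real.log s * b ≤ (s ^ a / (a * Real.exp 1)) * b :=
          mul_le_mul_of_nonneg_right hls hb
      _ = b / (a * Real.exp 1) * s ^ a := by ring

lemma my_exp_sub_exp {p q : ℝ} (_hqp : q ≤ p) :
    Real.exp p - Real.exp q ≤ Real.exp p * (p - q) := by
  have h := Real.add_one_le_exp (q - p)
  have hp : (0:ℝ) < Real.exp p := Real.exp_pos p
  have : Real.exp q = Real.exp p * Real.exp (q - p) := by
    rw [← Real.exp_add]; ring_nf
  nlinarith

lemma my_abs_exp_sub_exp (p q : ℝ) :
    |Real.exp p - Real.exp q| ≤ Real.exp (max p q) * |p - q| := by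
  rcases le_total q p with h | h
  · rw [max_eq_left h, abs_of_nonneg (sub_nonneg.2 (Real.exp_le_exp.2 h)),
      abs_of_nonneg (sub_nonneg.2 h)]
    exact my_exp_sub_exp h
  · rw [max_eq_right h, abs_sub_comm, abs_sub_comm p q,
      abs_of_nonneg (sub_nonneg.2 (Real.exp_le_exp.2 h)),
      abs_of_nonneg (sub_nonneg.2 h)]
    exact my_exp_sub_exp h

lemma my_rpow_sub_rpow {v u a : ℝ} (hv : 0 ≤ v) (hvu : v ≤ u) (ha : 1 ≤ a) :
    u ^ a - v ^ a ≤ a * u ^ (a - 1) * (u - v) := by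
  have hu : 0 ≤ u := hv.trans hvu
  have key : ∀ y ∈ Icc v u, ‖(fun s : ℝ => s ^ a) y - (fun s : ℝ => s ^ a) v‖ ≤
      a * u ^ (a - 1) * (y - v) := by
    apply norm_image_sub_le_of_norm_deriv_le_segment'
      (f' := fun s => a * s ^ (a - 1))
    · intro y hy
      exact (Real.hasDerivAt_rpow_const (Or.inr ha)).hasDerivWithinAt
    · intro y hy
      rw [Real.norm_eq_abs, abs_mul, abs_of_nonneg (by linarith : (0:ℝ) ≤ a),
        abs_of_nonneg (Real.rpow_nonneg (hv.trans hy.1) _)]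
      have : y ^ (a - 1) ≤ u ^ (a - 1) :=
        Real.rpow_le_rpow (hv.trans hy.1) hy.2.le (by linarith)
      nlinarith [Real.rpow_nonneg (hv.trans hy.1) (a - 1)]
  have := key u ⟨hvu, le_refl u⟩
  simp only [Real.norm_eq_abs] at this
  calc u ^ a - v ^ a ≤ |u ^ a - v ^ a| := le_abs_self _
    _ ≤ a * u ^ (a - 1) * (u - v) := this

lemma my_add_rpow {p q a : ℝ} (hp : 0 ≤ p) (hq : 0 ≤ q) (ha : 1 ≤ a) :
    (p + q) ^ a ≤ (2:ℝ) ^ (a - 1) * (p ^ a + q ^ a) := by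
  have h := NNReal.rpow_add_le_mul_rpow_add_rpow p.toNNReal q.toNNReal ha
  have h2 := NNReal.coe_le_coe.2 h
  push_cast at h2
  rwa [Real.coe_toNNReal _ hp, Real.coe_toNNReal _ hq] at h2

lemma my_sqrt_sub {t t' : ℝ} (ht : 0 ≤ t) (htt' : t ≤ t') :
    Real.sqrt t' - Real.sqrt t ≤ Real.sqrt (t' - t) := by
  have h2 : t' ≤ (Real.sqrt (t' - t) + Real.sqrt t) ^ 2 := by
    have e1 : Real.sqrt (t' - t) ^ 2 = t' - t := Real.sq_sqrt (by linarith)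
    have e2 : Real.sqrt t ^ 2 = t := Real.sq_sqrt ht
    nlinarith [Real.sqrt_nonneg (t' - t), Real.sqrt_nonneg t]
  have := (Real.sqrt_le_sqrt h2).trans_eq
    (Real.sqrt_sq (by positivity))
  linarith

theorem stmt_17 (c a n : ℝ) (hc : 0 < c) (ha : 1 < a) (hn : 0 < n)
    (x z t t' : ℝ) (ht : 0 ≤ t) (htt' : t ≤ t') (ht'n : t' ≤ n) :
    |Real.exp (c * |x - Real.sqrt t * z| ^ a) -
        Real.exp (c * |x - Real.sqrt t' * z| ^ a)| ≤
      a * c *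
        Real.exp ((c + (a - 1) / (a * Real.exp 1)) * (2:ℝ) ^ (a - 1) * |x| ^ a +
          ((c + (a - 1) / (a * Real.exp 1)) * (2:ℝ) ^ (a - 1) * n ^ (a / 2) +
            1 / (a * Real.exp 1)) * |z| ^ a) *
        Real.sqrt (t' - t) := by
  have ha0 : (0:ℝ) < a := by linarith
  have he : (0:ℝ) < Real.exp 1 := Real.exp_pos 1
  set u := x - Real.sqrt t * z with hu
  set v := x - Real.sqrt t' * z with hv
  set M := |x| + Real.sqrt n * |z| with hM
  have hM0 : 0 ≤ M := by positivity
  have habsu : |u| ≤ M := by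
    calc |u| ≤ |x| + |Real.sqrt t * z| := abs_sub _ _
      _ = |x| + Real.sqrt t * |z| := by
          rw [abs_mul, abs_of_nonneg (Real.sqrt_nonneg t)]
      _ ≤ M := by
          have : Real.sqrt t ≤ Real.sqrt n := Real.sqrt_le_sqrt (by linarith)
          have := mul_le_mul_of_nonneg_right this (abs_nonneg z)
          rw [hM]; linarith
  have habsv : |v| ≤ M := by
    calc |v| ≤ |x| + |Real.sqrt t' * z| := abs_sub _ _
      _ = |x| + Real.sqrt t' * |z| := by
          rw [abs_mul, abs_of_nonneg (Real.sqrt_nonneg t')]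
      _ ≤ M := by
          have : Real.sqrt t' ≤ Real.sqrt n := Real.sqrt_le_sqrt ht'n
          have := mul_le_mul_of_nonneg_right this (abs_nonneg z)
          rw [hM]; linarith
  -- Lipschitz bound on rpow difference
  have hrpow : abs (|u| ^ a - |v| ^ a) ≤ a * M ^ (a - 1) * |u - v| := by
    have hmono : M ^ (a - 1) = M ^ (a - 1) := rfl
    rcases le_total |v| |u| with h | h
    · have h1 := my_rpow_sub_rpow (abs_nonneg v) h ha.le
      have h2 : |u| ^ (a - 1) ≤ M ^ (a - 1) :=
        Real.rpow_le_rpow (abs_nonneg u) habsu (by linarith)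
      have h3 : |u| - |v| ≤ |u - v| := abs_sub_abs_le_abs_sub u v
      rw [abs_of_nonneg (sub_nonneg.2 (Real.rpow_le_rpow (abs_nonneg v) h ha0.le))]
      have h5 : |u| ^ (a - 1) * (|u| - |v|) ≤ M ^ (a - 1) * |u - v| :=
        mul_le_mul h2 h3 (by linarith) (Real.rpow_nonneg hM0 _)
      have h6 := mul_le_mul_of_nonneg_left h5 ha0.le
      rw [← mul_assoc, ← mul_assoc] at h6
      linarith
    · have h1 := my_rpow_sub_rpow (abs_nonneg u) h ha.le
      have h2 : |v| ^ (a - 1) ≤ M ^ (a - 1) :=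
        Real.rpow_le_rpow (abs_nonneg v) habsv (by linarith)
      have h3 : |v| - |u| ≤ |v - u| := abs_sub_abs_le_abs_sub v u
      have h4 : |v - u| = |u - v| := abs_sub_comm v u
      rw [h4] at h3
      rw [abs_sub_comm, abs_of_nonneg (sub_nonneg.2 (Real.rpow_le_rpow (abs_nonneg u) h ha0.le))]
      have h5 : |v| ^ (a - 1) * (|v| - |u|) ≤ M ^ (a - 1) * |u - v| :=
        mul_le_mul h2 h3 (by linarith) (Real.rpow_nonneg hM0 _)
      have h6 := mul_le_mul_of_nonneg_left h5 ha0.le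
      rw [← mul_assoc, ← mul_assoc] at h6
      linarith
  have huv : |u - v| ≤ Real.sqrt (t' - t) * |z| := by
    have : u - v = (Real.sqrt t' - Real.sqrt t) * z := by rw [hu, hv]; ring
    rw [this, abs_mul]
    have hs : |Real.sqrt t' - Real.sqrt t| = Real.sqrt t' - Real.sqrt t := by
      rw [abs_of_nonneg]
      exact sub_nonneg.2 (Real.sqrt_le_sqrt htt')
    rw [hs]
    exact mul_le_mul_of_nonneg_right (my_sqrt_sub ht htt') (abs_nonneg z)
  have hmax : max (c * |u| ^ a) (c * |v| ^ a) ≤ c * M ^ a := by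
    apply max_le
    · exact mul_le_mul_of_nonneg_left (Real.rpow_le_rpow (abs_nonneg u) habsu ha0.le) hc.le
    · exact mul_le_mul_of_nonneg_left (Real.rpow_le_rpow (abs_nonneg v) habsv ha0.le) hc.le
  -- main chain
  have step1 : |Real.exp (c * |u| ^ a) - Real.exp (c * |v| ^ a)| ≤
      Real.exp (c * M ^ a) * (c * (a * M ^ (a - 1) * (Real.sqrt (t' - t) * |z|))) := by
    calc |Real.exp (c * |u| ^ a) - Real.exp (c * |v| ^ a)|
        ≤ Real.exp (max (c * |u| ^ a) (c * |v| ^ a)) * |c * |u| ^ a - c * |v| ^ a| :=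
          my_abs_exp_sub_exp _ _
      _ ≤ Real.exp (c * M ^ a) * (c * (a * M ^ (a - 1) * (Real.sqrt (t' - t) * |z|))) := by
          apply mul_le_mul (Real.exp_le_exp.2 hmax) ?_ (abs_nonneg _) (Real.exp_pos _).le
          have : |c * |u| ^ a - c * |v| ^ a| = c * abs (|u| ^ a - |v| ^ a) := by
            rw [← mul_sub, abs_mul, abs_of_nonneg hc.le]
          rw [this]
          apply mul_le_mul_of_nonneg_left ?_ hc.le
          calc abs (|u| ^ a - |v| ^ a) ≤ a * M ^ (a - 1) * |u - v| := hrpow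
            _ ≤ a * M ^ (a - 1) * (Real.sqrt (t' - t) * |z|) := by
                apply mul_le_mul_of_nonneg_left huv
                positivity
  -- bound the exponential factor
  set K := c + (a - 1) / (a * Real.exp 1) with hK
  have hK0 : 0 ≤ K := by
    have : 0 ≤ (a - 1) / (a * Real.exp 1) := div_nonneg (by linarith) (by positivity)
    rw [hK]; linarith
  have hMa : M ^ a ≤ (2:ℝ) ^ (a - 1) * (|x| ^ a + n ^ (a / 2) * |z| ^ a) := by
    have h1 := my_add_rpow (abs_nonneg x) (by positivity : (0:ℝ) ≤ Real.sqrt n * |z|) ha.le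
    have h2 : (Real.sqrt n * |z|) ^ a = n ^ (a / 2) * |z| ^ a := by
      rw [Real.mul_rpow (Real.sqrt_nonneg n) (abs_nonneg z)]
      congr 1
      rw [Real.sqrt_eq_rpow, ← Real.rpow_mul hn.le]
      congr 1
      ring
    rw [h2] at h1
    exact h1
  have step2 : Real.exp (c * M ^ a) * M ^ (a - 1) * |z| ≤
      Real.exp (K * (2:ℝ) ^ (a - 1) * |x| ^ a +
        (K * (2:ℝ) ^ (a - 1) * n ^ (a / 2) + 1 / (a * Real.exp 1)) * |z| ^ a) := by
    have e1 : M ^ (a - 1) ≤ Real.exp ((a - 1) / (a * Real.exp 1) * M ^ a) :=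
      my_rpow_le_exp hM0 ha0 (by linarith)
    have e2 : |z| ≤ Real.exp (1 / (a * Real.exp 1) * |z| ^ a) := by
      have := my_rpow_le_exp (abs_nonneg z) ha0 (zero_le_one (α := ℝ))
      rwa [Real.rpow_one] at this
    calc Real.exp (c * M ^ a) * M ^ (a - 1) * |z|
        ≤ Real.exp (c * M ^ a) * Real.exp ((a - 1) / (a * Real.exp 1) * M ^ a) *
            Real.exp (1 / (a * Real.exp 1) * |z| ^ a) := by
          apply mul_le_mul ?_ e2 (abs_nonneg z) (by positivity)
          exact mul_le_mul_of_nonneg_left e1 (Real.exp_pos _).le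
      _ = Real.exp (K * M ^ a + 1 / (a * Real.exp 1) * |z| ^ a) := by
          rw [← Real.exp_add, ← Real.exp_add, hK]; ring_nf
      _ ≤ _ := by
          apply Real.exp_le_exp.2
          have h := mul_le_mul_of_nonneg_left hMa hK0
          have h' : K * ((2:ℝ) ^ (a - 1) * (|x| ^ a + n ^ (a / 2) * |z| ^ a)) =
              K * (2:ℝ) ^ (a - 1) * |x| ^ a + K * (2:ℝ) ^ (a - 1) * n ^ (a / 2) * |z| ^ a := by
            ring
          rw [h'] at h
          nlinarith [abs_nonneg z]
  calc |Real.exp (c * |u| ^ a) - Real.exp (c * |v| ^ a)|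
      ≤ Real.exp (c * M ^ a) * (c * (a * M ^ (a - 1) * (Real.sqrt (t' - t) * |z|))) := step1
    _ = a * c * (Real.exp (c * M ^ a) * M ^ (a - 1) * |z|) * Real.sqrt (t' - t) := by ring
    _ ≤ a * c * Real.exp (K * (2:ℝ) ^ (a - 1) * |x| ^ a +
          (K * (2:ℝ) ^ (a - 1) * n ^ (a / 2) + 1 / (a * Real.exp 1)) * |z| ^ a) *
          Real.sqrt (t' - t) := by
        apply mul_le_mul_of_nonneg_right ?_ (Real.sqrt_nonneg _)
        exact mul_le_mul_of_nonneg_left step2 (by positivity)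
end
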